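/- arXiv:1509.07001 — 6 statements merged into one kernel-verified Lean document; each statement's English description precedes it below -/
import Mathlib

section
/- Let (X,d) be a complete, simply-connected metric space equipped with a convex local geodesic bicombing σ, and let d̄ denote the induced length metric on X. If σ̃ and σ̃′ are two convex geodesic bicombings on (X,d̄) that are both consistent with σ (i.e. each σ̃_{xy} and each σ̃′_{xy}, viewed as a map into (X,d), is a local geodesic consistent with σ), then σ̃ = σ̃′. -/
/-!
Fix `x, y` and let `p = σ' x y`. The set of `s ∈ [0,1]` at which `σ' x (p s)` and `σ'' x (p s)`
agree contains `0`, and it is closed because convexity makes both bicombings `d̄`-Lipschitz in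
the endpoint. It is also open to the right: if both curves to `z₀` equal a curve `q`, then for `z`
that is `d̄`-close to `z₀` both curves to `z` stay uniformly close to `q`, so by a Lebesgue number
for the balls of `σ` along `q` they lie pointwise in a common ball of `σ`. There consistency makes
`t ↦ d(σ' x z t, σ'' x z t)` locally an affine reparametrization of a convex function, and a
continuous, locally convex function vanishing at both ends vanishes identically.
-/

open Set Metric

/-- `c : [0,1] → X` is a geodesic: `d(c s, c t) = |s - t| ⬝ d(c 0, c 1)` for `s, t ∈ [0,1]`. -/
def IsGeodesicSegment {X : Type*} [MetricSpace X] (c : ℝ → X) : Prop :=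
  ∀ s ∈ Icc (0:ℝ) 1, ∀ t ∈ Icc (0:ℝ) 1,
    dist (c s) (c t) = |s - t| * dist (c 0) (c 1)

/-- A local geodesic bicombing on a metric space `X`: an assignment `x ↦ r x > 0` and a
selection `σ y z` of geodesics from `y` to `z` for pairs `y, z` lying in a common ball
`U(x, r x)`, staying in that ball, and consistent with taking subsegments. -/
structure LocalGeodesicBicombing (X : Type*) [MetricSpace X] where
  r : X → ℝ
  r_pos : ∀ x, 0 < r x
  σ : X → X → ℝ → X
  source : ∀ x y z, y ∈ ball x (r x) → z ∈ ball x (r x) → σ y z 0 = y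
  target : ∀ x y z, y ∈ ball x (r x) → z ∈ ball x (r x) → σ y z 1 = z
  geodesic : ∀ x y z, y ∈ ball x (r x) → z ∈ ball x (r x) →
    ∀ s ∈ Icc (0:ℝ) 1, ∀ t ∈ Icc (0:ℝ) 1, dist (σ y z s) (σ y z t) = |s - t| * dist y z
  mem_ball : ∀ x y z, y ∈ ball x (r x) → z ∈ ball x (r x) →
    ∀ t ∈ Icc (0:ℝ) 1, σ y z t ∈ ball x (r x)
  consistent : ∀ x y z, y ∈ ball x (r x) → z ∈ ball x (r x) →
    ∀ a b, 0 ≤ a → a ≤ b → b ≤ 1 → ∀ t ∈ Icc (0:ℝ) 1,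
      σ (σ y z a) (σ y z b) t = σ y z ((1 - t) * a + t * b)

namespace LocalGeodesicBicombing

variable {X : Type*} [MetricSpace X]

/-- The domain `U` of the local bicombing: pairs of points lying in a common ball `U(x, r x)`. -/
def InDom (L : LocalGeodesicBicombing X) (y z : X) : Prop :=
  ∃ x, y ∈ ball x (L.r x) ∧ z ∈ ball x (L.r x)

/-- A local geodesic bicombing is convex if it is locally convex. -/
def IsConvex (L : LocalGeodesicBicombing X) : Prop :=
  ∀ x, ∀ y ∈ ball x (L.r x), ∀ z ∈ ball x (L.r x), ∀ y' ∈ ball x (L.r x), ∀ z' ∈ ball x (L.r x),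
    ConvexOn ℝ (Icc (0:ℝ) 1) (fun t => dist (L.σ y z t) (L.σ y' z' t))

/-- A local geodesic bicombing is reversible if `σ z y (t) = σ y z (1 - t)` on its domain. -/
def IsReversible (L : LocalGeodesicBicombing X) : Prop :=
  ∀ y z, L.InDom y z → ∀ t ∈ Icc (0:ℝ) 1, L.σ z y t = L.σ y z (1 - t)

end LocalGeodesicBicombing

/-- The length `L(γ)` of a curve `γ : [0,1] → X` (as a real number; the supremum over
partitions of `[0,1]` of the sums of consecutive distances). -/
noncomputable def curveLength {X : Type*} [MetricSpace X] (γ : ℝ → X) : ℝ :=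
  (eVariationOn γ (Icc (0:ℝ) 1)).toReal

/-- `c : [0,1] → X` is a local geodesic: every `t ∈ [0,1]` has a neighborhood in `[0,1]` on
which `d(c s, c s') = |s - s'| ⬝ L(c)`. -/
def IsLocalGeodesic {X : Type*} [MetricSpace X] (c : ℝ → X) : Prop :=
  ∀ t ∈ Icc (0:ℝ) 1, ∃ ε > (0:ℝ),
    ∀ s ∈ Icc (0:ℝ) 1 ∩ Ioo (t - ε) (t + ε), ∀ s' ∈ Icc (0:ℝ) 1 ∩ Ioo (t - ε) (t + ε),
      dist (c s) (c s') = |s - s'| * curveLength c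

/-- A curve `c : [0,1] → X` is consistent with the local geodesic bicombing `L` if
`c ((1-t)a + tb) = σ (c a) (c b) t` whenever `0 ≤ a ≤ b ≤ 1` and `(c a, c b)` is in the
domain of `L`. -/
def LocalGeodesicBicombing.ConsistentWith {X : Type*} [MetricSpace X]
    (L : LocalGeodesicBicombing X) (c : ℝ → X) : Prop :=
  ∀ a b, 0 ≤ a → a ≤ b → b ≤ 1 → L.InDom (c a) (c b) →
    ∀ t ∈ Icc (0:ℝ) 1, c ((1 - t) * a + t * b) = L.σ (c a) (c b) t

/-- The induced length metric `d̄(x,y)`: the infimum of lengths of continuous curves from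
`x` to `y`. -/
noncomputable def lengthMetric {X : Type*} [MetricSpace X] (x y : X) : ℝ :=
  (⨅ (γ : ℝ → X) (_ : ContinuousOn γ (Icc (0:ℝ) 1)) (_ : γ 0 = x) (_ : γ 1 = y),
    eVariationOn γ (Icc (0:ℝ) 1)).toReal

/-- `σ'` is a convex geodesic bicombing on `(X, d̄)` (where `d̄` is the induced length metric)
which is consistent with the local geodesic bicombing `L` on `(X, d)`: each `σ' x y` is a
geodesic from `x` to `y` with respect to `d̄`, the selection is consistent with taking
subsegments, the function `t ↦ d̄(σ' x y t, σ' x' y' t)` is convex on `[0,1]`, and each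
`σ' x y`, viewed as a map into `(X, d)`, is a local geodesic consistent with `L`. -/
structure IsConsistentConvexBicombing {X : Type*} [MetricSpace X]
    (L : LocalGeodesicBicombing X) (σ' : X → X → ℝ → X) : Prop where
  source : ∀ x y, σ' x y 0 = x
  target : ∀ x y, σ' x y 1 = y
  geodesic : ∀ x y, ∀ s ∈ Icc (0:ℝ) 1, ∀ t ∈ Icc (0:ℝ) 1,
    lengthMetric (σ' x y s) (σ' x y t) = |s - t| * lengthMetric x y
  consistent : ∀ x y a b, 0 ≤ a → a ≤ b → b ≤ 1 → ∀ t ∈ Icc (0:ℝ) 1,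
    σ' (σ' x y a) (σ' x y b) t = σ' x y ((1 - t) * a + t * b)
  convex : ∀ x y x' y', ConvexOn ℝ (Icc (0:ℝ) 1)
    (fun t => lengthMetric (σ' x y t) (σ' x' y' t))
  localGeodesic : ∀ x y, IsLocalGeodesic (σ' x y)
  consistentWith : ∀ x y, L.ConsistentWith (σ' x y)

open Filter Topology

theorem le_max_of_locally_convexOn_Icc {f : ℝ → ℝ} {a b : ℝ} (hf : ContinuousOn f (Icc a b))
    (hloc : ∀ t ∈ Icc a b, ∃ δ > 0, ConvexOn ℝ (Icc a b ∩ Icc (t - δ) (t + δ)) f) :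
    ∀ t ∈ Icc a b, f t ≤ max (f a) (f b) := by
  by_contra! ⟨t, ht, hlt⟩
  obtain ⟨tm, htm, hmax⟩ := isCompact_Icc.exists_isMaxOn ⟨t, ht⟩ hf
  set M := f tm
  have hM : max (f a) (f b) < M := hlt.trans_le (hmax ht)
  -- the leftmost maximum point cannot lie inside a window of convexity
  set S := {s ∈ Icc a b | f s = M}
  have hSbdd : BddBelow S := ⟨a, fun s hs => hs.1.1⟩
  obtain ⟨⟨hats, htsb⟩, hts⟩ : sInf S ∈ S :=
    (isClosed_Icc.isClosed_eq hf continuousOn_const).csInf_mem ⟨tm, htm, rfl⟩ hSbdd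
  set ts := sInf S
  have hats' : a < ts := hats.lt_of_ne fun h => by
    have : f a = M := h ▸ hts
    linarith [le_max_left (f a) (f b)]
  have htsb' : ts < b := htsb.lt_of_ne fun h => by
    have : f b = M := h ▸ hts
    linarith [le_max_right (f a) (f b)]
  obtain ⟨δ, hδ, hconv⟩ := hloc ts ⟨hats, htsb⟩
  rw [Icc_inter_Icc] at hconv
  set a' := a ⊔ (ts - δ)
  set b' := b ⊓ (ts + δ)
  have ha't : a' < ts := max_lt hats' (by linarith)
  have htb' : ts < b' := lt_min htsb' (by linarith)
  have hfa' : f a' < M := (hmax ⟨le_max_left _ _, by linarith⟩).lt_of_ne fun h =>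
    (csInf_le hSbdd ⟨⟨le_max_left _ _, by linarith⟩, h⟩).not_gt ha't
  have hfb' : M < f b' := by
    rw [← hts] at hfa' ⊢
    exact hconv.lt_right_of_left_lt (left_mem_Icc.2 (ha't.trans htb').le)
      (right_mem_Icc.2 (ha't.trans htb').le) (Ioo_subset_openSegment ⟨ha't, htb'⟩) hfa'
  exact (hmax ⟨by linarith, min_le_left _ _⟩ : f b' ≤ M).not_gt hfb'

section LocalGeodesic

variable {X : Type*} [MetricSpace X] {c : ℝ → X}

theorem IsLocalGeodesic.continuousOn (h : IsLocalGeodesic c) : ContinuousOn c (Icc 0 1) := by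
  intro t ht
  obtain ⟨ε, hε, hloc⟩ := h t ht
  have ht' : t ∈ Icc (0:ℝ) 1 ∩ Ioo (t - ε) (t + ε) := ⟨ht, by constructor <;> linarith⟩
  have hdist : (fun s => |s - t| * curveLength c) =ᶠ[𝓝[Icc 0 1] t] fun s => dist (c s) (c t) := by
    filter_upwards [self_mem_nhdsWithin,
      nhdsWithin_le_nhds (Ioo_mem_nhds (by linarith : t - ε < t) (by linarith : t < t + ε))]
      with s hs hs'
    exact (hloc s ⟨hs, hs'⟩ t ht').symm
  rw [ContinuousWithinAt, tendsto_iff_dist_tendsto_zero]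
  refine Tendsto.congr' hdist ?_
  have : Continuous fun s => |s - t| * curveLength c := by fun_prop
  simpa using this.continuousWithinAt (s := Icc 0 1) (x := t) |>.tendsto

theorem IsLocalGeodesic.dist_le (h : IsLocalGeodesic c) {s u : ℝ} (hs : s ∈ Icc (0:ℝ) 1)
    (hu : u ≤ 1) (hsu : s ≤ u) : dist (c s) (c u) ≤ curveLength c * (u - s) := by
  set S := {v | dist (c s) (c v) ≤ curveLength c * (v - s)}
  have hclosed : IsClosed (S ∩ Icc s 1) := by
    rw [inter_comm]
    have hc : ContinuousOn c (Icc s 1) := h.continuousOn.mono (Icc_subset_Icc_left hs.1)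
    exact isClosed_Icc.isClosed_le (f := fun v => dist (c s) (c v))
      (g := fun v => curveLength c * (v - s)) (by fun_prop) (by fun_prop)
  refine hclosed.Icc_subset_of_forall_mem_nhdsWithin (by simp [S]) ?_ ⟨hsu, hu⟩
  rintro v ⟨hvS : dist (c s) (c v) ≤ curveLength c * (v - s), hsv, hv1⟩
  have hv : v ∈ Icc (0:ℝ) 1 := ⟨hs.1.trans hsv, hv1.le⟩
  obtain ⟨ε, hε, hloc⟩ := h v hv
  filter_upwards [Ioo_mem_nhdsGT hv1, Ioo_mem_nhdsGT (by linarith : v < v + ε)] with w hw hwε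
  have hvw : dist (c v) (c w) = (w - v) * curveLength c := by
    rw [hloc v ⟨hv, by constructor <;> linarith⟩ w ⟨⟨by linarith [hw.1, hv.1], hw.2.le⟩,
      by constructor <;> linarith [hwε.1, hwε.2]⟩, abs_sub_comm, abs_of_pos (sub_pos.2 hw.1)]
  calc dist (c s) (c w) ≤ dist (c s) (c v) + dist (c v) (c w) := dist_triangle _ _ _
    _ ≤ curveLength c * (v - s) + (w - v) * curveLength c := by rw [hvw]; linarith
    _ = curveLength c * (w - s) := by ring

theorem IsLocalGeodesic.lipschitzOnWith (h : IsLocalGeodesic c) :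
    LipschitzOnWith (curveLength c).toNNReal c (Icc 0 1) := by
  refine LipschitzOnWith.of_dist_le' fun s hs u hu => ?_
  rcases le_total s u with hsu | hus
  · rw [Real.dist_eq, abs_sub_comm, abs_of_nonneg (sub_nonneg.2 hsu)]
    exact h.dist_le hs hu.2 hsu
  · rw [Real.dist_eq, abs_of_nonneg (sub_nonneg.2 hus), dist_comm]
    exact h.dist_le hu hs.2 hus

theorem IsLocalGeodesic.eVariationOn_ne_top (h : IsLocalGeodesic c) :
    eVariationOn c (Icc 0 1) ≠ ⊤ := by
  have := h.lipschitzOnWith.locallyBoundedVariationOn 0 1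
    (left_mem_Icc.2 zero_le_one) (right_mem_Icc.2 zero_le_one)
  rwa [inter_self] at this

end LocalGeodesic

section LengthMetric

variable {X : Type*} [MetricSpace X]

theorem lengthMetric_nonneg (x y : X) : 0 ≤ lengthMetric x y := ENNReal.toReal_nonneg

theorem lengthMetric_self (x : X) : lengthMetric x x = 0 := by
  have h : (⨅ (γ : ℝ → X) (_ : ContinuousOn γ (Icc (0:ℝ) 1)) (_ : γ 0 = x) (_ : γ 1 = x),
      eVariationOn γ (Icc (0:ℝ) 1)) = 0 :=
    nonpos_iff_eq_zero.1 <| iInf_le_of_le (fun _ => x) <| iInf_le_of_le continuousOn_const <|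
      iInf_le_of_le rfl <| iInf_le_of_le rfl (eVariationOn.constant_on (by simp)).le
  rw [lengthMetric, h, ENNReal.toReal_zero]

theorem dist_le_lengthMetric {γ : ℝ → X} (hγ : ContinuousOn γ (Icc 0 1))
    (hfin : eVariationOn γ (Icc 0 1) ≠ ⊤) : dist (γ 0) (γ 1) ≤ lengthMetric (γ 0) (γ 1) := by
  have hle : (⨅ (γ' : ℝ → X) (_ : ContinuousOn γ' (Icc (0:ℝ) 1)) (_ : γ' 0 = γ 0)
      (_ : γ' 1 = γ 1), eVariationOn γ' (Icc (0:ℝ) 1)) ≤ eVariationOn γ (Icc 0 1) :=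
    iInf_le_of_le γ <| iInf_le_of_le hγ <| iInf_le_of_le rfl <| iInf_le_of_le rfl le_rfl
  have hge : edist (γ 0) (γ 1) ≤ ⨅ (γ' : ℝ → X) (_ : ContinuousOn γ' (Icc (0:ℝ) 1))
      (_ : γ' 0 = γ 0) (_ : γ' 1 = γ 1), eVariationOn γ' (Icc (0:ℝ) 1) :=
    le_iInf fun γ' => le_iInf fun _ => le_iInf fun h0 => le_iInf fun h1 => h0 ▸ h1 ▸
      eVariationOn.edist_le γ' (left_mem_Icc.2 zero_le_one) (right_mem_Icc.2 zero_le_one)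
  rw [dist_edist]
  exact ENNReal.toReal_mono (ne_top_of_le_ne_top hfin hle) hge

end LengthMetric

namespace LocalGeodesicBicombing

variable {X : Type*} [MetricSpace X] {L : LocalGeodesicBicombing X} {c c₁ c₂ : ℝ → X}

theorem ConsistentWith.apply_eq_σ (h : L.ConsistentWith c) {a b w : ℝ} (ha : 0 ≤ a) (hab : a < b)
    (hb : b ≤ 1) (hdom : L.InDom (c a) (c b)) (hw : w ∈ Icc a b) :
    c w = L.σ (c a) (c b) ((w - a) / (b - a)) := by
  have hba : 0 < b - a := sub_pos.2 hab
  have hw' : (1 - (w - a) / (b - a)) * a + (w - a) / (b - a) * b = w := by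
    field_simp
    ring
  rw [← h a b ha hab.le hb hdom _ ⟨div_nonneg (by linarith [hw.1]) hba.le,
    (div_le_one hba).2 (by linarith [hw.2])⟩, hw']

theorem ConsistentWith.convexOn_dist (hL : L.IsConvex) (h₁ : L.ConsistentWith c₁)
    (h₂ : L.ConsistentWith c₂) {a b : ℝ} (ha : 0 ≤ a) (hab : a < b) (hb : b ≤ 1) {z : X}
    (hz : ∀ w ∈ Icc a b, c₁ w ∈ ball z (L.r z) ∧ c₂ w ∈ ball z (L.r z)) :
    ConvexOn ℝ (Icc a b) fun w => dist (c₁ w) (c₂ w) := by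
  obtain ⟨h₁a, h₂a⟩ := hz a (left_mem_Icc.2 hab.le)
  obtain ⟨h₁b, h₂b⟩ := hz b (right_mem_Icc.2 hab.le)
  set g : ℝ →ᵃ[ℝ] ℝ := (b - a)⁻¹ • (AffineMap.id ℝ ℝ - AffineMap.const ℝ ℝ a)
  have hg : ∀ w, g w = (w - a) / (b - a) := fun w => by simp [g, div_eq_inv_mul]
  have hsub : Icc a b ⊆ g ⁻¹' Icc 0 1 := fun w hw => by
    rw [mem_preimage, hg]
    exact ⟨div_nonneg (by linarith [hw.1]) (by linarith),
      (div_le_one (by linarith)).2 (by linarith [hw.2])⟩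
  refine (((hL z _ h₁a _ h₁b _ h₂a _ h₂b).comp_affineMap g).subset hsub (convex_Icc a b)).congr
    fun w hw => ?_
  simp only [Function.comp_apply, hg]
  rw [← h₁.apply_eq_σ ha hab hb ⟨z, h₁a, h₁b⟩ hw, ← h₂.apply_eq_σ ha hab hb ⟨z, h₂a, h₂b⟩ hw]

theorem ConsistentWith.exists_convexOn_dist (hL : L.IsConvex) (h₁ : L.ConsistentWith c₁)
    (h₂ : L.ConsistentWith c₂) (hc₁ : ContinuousOn c₁ (Icc 0 1))
    (hc₂ : ContinuousOn c₂ (Icc 0 1)) {t : ℝ} (ht : t ∈ Icc (0:ℝ) 1) {z : X}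
    (h₁t : c₁ t ∈ ball z (L.r z)) (h₂t : c₂ t ∈ ball z (L.r z)) :
    ∃ δ > 0, ConvexOn ℝ (Icc 0 1 ∩ Icc (t - δ) (t + δ)) fun w => dist (c₁ w) (c₂ w) := by
  have hnhds : c₁ ⁻¹' ball z (L.r z) ∩ c₂ ⁻¹' ball z (L.r z) ∈ 𝓝[Icc 0 1] t :=
    inter_mem (hc₁ t ht (isOpen_ball.mem_nhds h₁t)) (hc₂ t ht (isOpen_ball.mem_nhds h₂t))
  obtain ⟨ε, hε, hball⟩ := Metric.mem_nhdsWithin_iff.1 hnhds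
  refine ⟨ε / 2, half_pos hε, ?_⟩
  rw [Icc_inter_Icc]
  refine h₁.convexOn_dist hL h₂ (le_max_left _ _) ?_ (min_le_left _ _) fun w hw => hball ⟨?_, ?_⟩
  · exact max_lt (lt_min zero_lt_one (by linarith [ht.1]))
      (lt_min (by linarith [ht.2]) (by linarith))
  · have := le_sup_right.trans hw.1
    have := hw.2.trans inf_le_right
    rw [Metric.mem_ball, Real.dist_eq, abs_sub_lt_iff]
    constructor <;> linarith
  · exact ⟨le_sup_left.trans hw.1, hw.2.trans inf_le_left⟩

theorem ConsistentWith.eqOn (hL : L.IsConvex) (h₁ : L.ConsistentWith c₁)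
    (h₂ : L.ConsistentWith c₂) (hc₁ : ContinuousOn c₁ (Icc 0 1))
    (hc₂ : ContinuousOn c₂ (Icc 0 1)) (h0 : c₁ 0 = c₂ 0) (h1 : c₁ 1 = c₂ 1)
    (hnear : ∀ t ∈ Icc (0:ℝ) 1, ∃ z, c₁ t ∈ ball z (L.r z) ∧ c₂ t ∈ ball z (L.r z)) :
    EqOn c₁ c₂ (Icc 0 1) := by
  have hmax := le_max_of_locally_convexOn_Icc (f := fun w => dist (c₁ w) (c₂ w))
    (by fun_prop) fun t ht => by
    obtain ⟨z, h₁t, h₂t⟩ := hnear t ht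
    exact h₁.exists_convexOn_dist hL h₂ hc₁ hc₂ ht h₁t h₂t
  intro t ht
  simpa [h0, h1] using hmax t ht

end LocalGeodesicBicombing

namespace IsConsistentConvexBicombing

variable {X : Type*} [MetricSpace X] {L : LocalGeodesicBicombing X} {σ σ₁ σ₂ : X → X → ℝ → X}

theorem continuousOn (h : IsConsistentConvexBicombing L σ) (x y : X) :
    ContinuousOn (σ x y) (Icc 0 1) :=
  (h.localGeodesic x y).continuousOn

theorem dist_le_lengthMetric (h : IsConsistentConvexBicombing L σ) (x y : X) :
    dist x y ≤ lengthMetric x y := by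
  simpa only [h.source, h.target] using
    _root_.dist_le_lengthMetric (h.continuousOn x y) (h.localGeodesic x y).eVariationOn_ne_top

theorem dist_apply_le_lengthMetric (h : IsConsistentConvexBicombing L σ) (x y y' : X) {t : ℝ}
    (ht : t ∈ Icc (0:ℝ) 1) : dist (σ x y t) (σ x y' t) ≤ lengthMetric y y' := by
  have hconv := (h.convex x y x y').2 (left_mem_Icc.2 zero_le_one) (right_mem_Icc.2 zero_le_one)
    (sub_nonneg.2 ht.2) ht.1 (sub_add_cancel 1 t)
  simp only [smul_eq_mul, mul_zero, mul_one, zero_add, h.source, h.target,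
    lengthMetric_self] at hconv
  calc dist (σ x y t) (σ x y' t) ≤ lengthMetric (σ x y t) (σ x y' t) := h.dist_le_lengthMetric _ _
    _ ≤ t * lengthMetric y y' := hconv
    _ ≤ lengthMetric y y' := mul_le_of_le_one_left (lengthMetric_nonneg y y') ht.2

theorem apply_self (h : IsConsistentConvexBicombing L σ) (x : X) {t : ℝ}
    (ht : t ∈ Icc (0:ℝ) 1) : σ x x t = x := by
  have hd := h.dist_le_lengthMetric (σ x x t) (σ x x 0)
  rw [h.geodesic x x t ht 0 (left_mem_Icc.2 zero_le_one), lengthMetric_self, mul_zero,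
    h.source] at hd
  exact dist_le_zero.1 hd

theorem continuousOn_apply_comp (h : IsConsistentConvexBicombing L σ) {γ : ℝ → X} {C : ℝ}
    (hγ : ∀ s ∈ Icc (0:ℝ) 1, ∀ s' ∈ Icc (0:ℝ) 1, lengthMetric (γ s) (γ s') = |s - s'| * C)
    (x : X) {t : ℝ} (ht : t ∈ Icc (0:ℝ) 1) : ContinuousOn (fun s => σ x (γ s) t) (Icc 0 1) := by
  refine (LipschitzOnWith.of_dist_le' (K := C) fun s hs s' hs' => ?_).continuousOn
  rw [Real.dist_eq, mul_comm, ← hγ s hs s' hs']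
  exact h.dist_apply_le_lengthMetric x _ _ ht

theorem isClosed_setOf_eqOn_comp (h₁ : IsConsistentConvexBicombing L σ₁)
    (h₂ : IsConsistentConvexBicombing L σ₂) {γ : ℝ → X} {C : ℝ}
    (hγ : ∀ s ∈ Icc (0:ℝ) 1, ∀ s' ∈ Icc (0:ℝ) 1, lengthMetric (γ s) (γ s') = |s - s'| * C)
    (x : X) : IsClosed ({s | EqOn (σ₁ x (γ s)) (σ₂ x (γ s)) (Icc 0 1)} ∩ Icc 0 1) := by
  have hA : {s | EqOn (σ₁ x (γ s)) (σ₂ x (γ s)) (Icc 0 1)} ∩ Icc 0 1 =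
      Icc 0 1 ∩ ⋂ t ∈ Icc (0:ℝ) 1, {s ∈ Icc 0 1 | σ₁ x (γ s) t = σ₂ x (γ s) t} := by
    ext s
    simp only [mem_inter_iff, mem_iInter]
    exact ⟨fun ⟨h, hs⟩ => ⟨hs, fun t ht => ⟨hs, h ht⟩⟩,
      fun ⟨hs, h⟩ => ⟨fun t ht => (h t ht).2, hs⟩⟩
  rw [hA]
  exact isClosed_Icc.inter <| isClosed_biInter fun t ht => isClosed_Icc.isClosed_eq
    (h₁.continuousOn_apply_comp hγ x ht) (h₂.continuousOn_apply_comp hγ x ht)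

theorem exists_eqOn_of_lengthMetric_lt (hL : L.IsConvex) (h₁ : IsConsistentConvexBicombing L σ₁)
    (h₂ : IsConsistentConvexBicombing L σ₂) {x y₀ : X}
    (h₀ : EqOn (σ₁ x y₀) (σ₂ x y₀) (Icc 0 1)) :
    ∃ ρ > 0, ∀ y, lengthMetric y y₀ < ρ → EqOn (σ₁ x y) (σ₂ x y) (Icc 0 1) := by
  obtain ⟨ρ, hρ, hleb⟩ := lebesgue_number_lemma_of_metric
    (isCompact_Icc.image_of_continuousOn (h₁.continuousOn x y₀))
    (c := fun z => ball z (L.r z)) (fun _ => isOpen_ball)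
    fun w _ => mem_iUnion.2 ⟨w, mem_ball_self (L.r_pos w)⟩
  refine ⟨ρ, hρ, fun y hy => (h₁.consistentWith x y).eqOn hL (h₂.consistentWith x y)
    (h₁.continuousOn x y) (h₂.continuousOn x y) (by rw [h₁.source, h₂.source])
    (by rw [h₁.target, h₂.target]) fun t ht => ?_⟩
  obtain ⟨z, hz⟩ := hleb _ (mem_image_of_mem _ ht)
  refine ⟨z, hz ?_, hz ?_⟩
  · exact (h₁.dist_apply_le_lengthMetric x y y₀ ht).trans_lt hy
  · rw [h₀ ht]
    exact (h₂.dist_apply_le_lengthMetric x y y₀ ht).trans_lt hy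

end IsConsistentConvexBicombing

theorem unique_consistent_convex_bicombing_general
    {X : Type*} [MetricSpace X]
    (L : LocalGeodesicBicombing X) (hL : L.IsConvex)
    (σ' σ'' : X → X → ℝ → X)
    (h' : IsConsistentConvexBicombing L σ') (h'' : IsConsistentConvexBicombing L σ'') :
    ∀ x y : X, ∀ t ∈ Icc (0:ℝ) 1, σ' x y t = σ'' x y t := by
  intro x y
  set p := σ' x y
  set A := {s | EqOn (σ' x (p s)) (σ'' x (p s)) (Icc 0 1)}
  have hclosed : IsClosed (A ∩ Icc 0 1) :=
    h'.isClosed_setOf_eqOn_comp h'' (h'.geodesic x y) x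
  have hstep : ∀ s ∈ A ∩ Ico 0 1, A ∈ 𝓝[>] s := by
    rintro s ⟨hs, hs0, hs1⟩
    obtain ⟨ρ, hρ, hnear⟩ := h'.exists_eqOn_of_lengthMetric_lt hL h'' hs
    have hcont : Continuous fun s' => |s' - s| * lengthMetric x y := by fun_prop
    filter_upwards [Ioo_mem_nhdsGT hs1, nhdsWithin_le_nhds
      (hcont.continuousAt.eventually_lt continuousAt_const (by simpa using hρ))] with s' hs' hlt
    exact hnear _ (by rwa [h'.geodesic x y s' ⟨by linarith [hs'.1], hs'.2.le⟩ s ⟨hs0, hs1.le⟩])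
  have h0 : (0:ℝ) ∈ A := fun t ht => by
    simp only [p, h'.source, h'.apply_self x ht, h''.apply_self x ht]
  have h1 : (1:ℝ) ∈ A :=
    hclosed.Icc_subset_of_forall_mem_nhdsWithin h0 hstep (right_mem_Icc.2 zero_le_one)
  intro t ht
  simpa only [p, h'.target] using h1 ht

/-- **Cartan–Hadamard theorem for convex bicombings (uniqueness).**
In a complete, simply-connected metric space with a convex local geodesic bicombing `σ`,
any two convex geodesic bicombings (with respect to the induced length metric) which are
consistent with `σ` agree on `[0,1]`. -/
theorem unique_consistent_convex_bicombing
    {X : Type*} [MetricSpace X] [CompleteSpace X] [SimplyConnectedSpace X]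
    (L : LocalGeodesicBicombing X) (hL : L.IsConvex)
    (σ' σ'' : X → X → ℝ → X)
    (h' : IsConsistentConvexBicombing L σ') (h'' : IsConsistentConvexBicombing L σ'') :
    ∀ x y : X, ∀ t ∈ Icc (0:ℝ) 1, σ' x y t = σ'' x y t :=
  unique_consistent_convex_bicombing_general L hL σ' σ'' h' h''
end

section
/- Let X be a complete metric space with a convex local geodesic bicombing σ, fix x₀ ∈ X, and let X̃_{x₀} be the set of all local geodesics c : [0,1] → X with c(0) = x₀ that are consistent with σ, equipped with the metric D(c,c′) = sup_{t∈[0,1]} d(c(t), c′(t)). Then the metric space (X̃_{x₀}, D) is complete. -/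
open Set Metric

/-- The space `X̃_{x₀}` of local geodesics `c : [0,1] → X` with `c 0 = x₀` which are
consistent with the local geodesic bicombing `L`, as a subspace of the space of continuous
maps `C([0,1], X)` with the supremum metric `D(c, c') = sup_{t ∈ [0,1]} d(c t, c' t)`. -/
noncomputable def Xtilde {X : Type*} [MetricSpace X] (L : LocalGeodesicBicombing X) (x₀ : X) : Type _ :=
  {f : C(Icc (0:ℝ) 1, X) //
    IsLocalGeodesic (IccExtend (zero_le_one' ℝ) f) ∧
    L.ConsistentWith (IccExtend (zero_le_one' ℝ) f) ∧
    IccExtend (zero_le_one' ℝ) f 0 = x₀}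

/-- `X̃_{x₀}` carries the supremum metric `D`. -/
noncomputable instance {X : Type*} [MetricSpace X] (L : LocalGeodesicBicombing X) (x₀ : X) :
    MetricSpace (Xtilde L x₀) :=
  Subtype.metricSpace

/-- The map `exp : X̃_{x₀} → X`, `c ↦ c 1`. -/
noncomputable def expMap {X : Type*} [MetricSpace X] (L : LocalGeodesicBicombing X) (x₀ : X)
    (c : Xtilde L x₀) : X :=
  IccExtend (zero_le_one' ℝ) c.1 1

section Aux
open Filter Topology

variable {X : Type*} [MetricSpace X]

lemma dist_sigma_le {L : LocalGeodesicBicombing X} (hL : L.IsConvex) {x y z y' z' : X}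
    (hy : y ∈ ball x (L.r x)) (hz : z ∈ ball x (L.r x)) (hy' : y' ∈ ball x (L.r x))
    (hz' : z' ∈ ball x (L.r x)) {t : ℝ} (ht : t ∈ Icc (0:ℝ) 1) :
    dist (L.σ y z t) (L.σ y' z' t) ≤ max (dist y y') (dist z z') := by
  have hconv := hL x y hy z hz y' hy' z' hz'
  have h01 : (0:ℝ) ∈ Icc (0:ℝ) 1 := ⟨le_refl 0, zero_le_one⟩
  have h11 : (1:ℝ) ∈ Icc (0:ℝ) 1 := ⟨zero_le_one, le_refl 1⟩
  have key := hconv.2 h01 h11 (sub_nonneg.2 ht.2) ht.1 (by ring)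
  simp only [smul_eq_mul, mul_zero, mul_one, zero_add] at key
  have e0 : L.σ y z 0 = y := L.source x y z hy hz
  have e1 : L.σ y z 1 = z := L.target x y z hy hz
  have e0' : L.σ y' z' 0 = y' := L.source x y' z' hy' hz'
  have e1' : L.σ y' z' 1 = z' := L.target x y' z' hy' hz'
  rw [e0, e1, e0', e1'] at key
  calc dist (L.σ y z t) (L.σ y' z' t) ≤ (1 - t) * dist y y' + t * dist z z' := key
    _ ≤ (1 - t) * max (dist y y') (dist z z') + t * max (dist y y') (dist z z') := by
        gcongr
        · linarith [ht.2]
        · exact le_max_left _ _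
        · exact ht.1
        · exact le_max_right _ _
    _ = max (dist y y') (dist z z') := by ring

lemma consistentWith_of_tendsto {L : LocalGeodesicBicombing X} (hL : L.IsConvex)
    {c : ℝ → X} {cs : ℕ → ℝ → X} (hcs : ∀ n, L.ConsistentWith (cs n))
    (htend : ∀ t ∈ Icc (0:ℝ) 1, Filter.Tendsto (fun n => cs n t) Filter.atTop (nhds (c t))) :
    L.ConsistentWith c := by
  intro a b ha hab hb1 hdom t ht
  obtain ⟨x, hxa, hxb⟩ := hdom
  set m := (1 - t) * a + t * b with hm
  have haI : a ∈ Icc (0:ℝ) 1 := ⟨ha, hab.trans hb1⟩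
  have hbI : b ∈ Icc (0:ℝ) 1 := ⟨ha.trans hab, hb1⟩
  have hmI : m ∈ Icc (0:ℝ) 1 := by
    constructor
    · have : 0 ≤ (1 - t) * a := mul_nonneg (by linarith [ht.2]) ha
      have : 0 ≤ t * b := mul_nonneg ht.1 (ha.trans hab)
      nlinarith [ht.1, ht.2]
    · nlinarith [ht.1, ht.2, hab, hb1, ha]
  rw [← dist_le_zero]
  refine le_of_forall_pos_le_add ?_
  intro ε hε
  have Ea : ∀ᶠ n in Filter.atTop, cs n a ∈ ball x (L.r x) :=
    (htend a haI).eventually (isOpen_ball.mem_nhds hxa)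
  have Eb : ∀ᶠ n in Filter.atTop, cs n b ∈ ball x (L.r x) :=
    (htend b hbI).eventually (isOpen_ball.mem_nhds hxb)
  have Da : ∀ᶠ n in Filter.atTop, dist (cs n a) (c a) < ε / 2 :=
    (htend a haI) (Metric.ball_mem_nhds _ (by linarith))
  have Db : ∀ᶠ n in Filter.atTop, dist (cs n b) (c b) < ε / 2 :=
    (htend b hbI) (Metric.ball_mem_nhds _ (by linarith))
  have Dm : ∀ᶠ n in Filter.atTop, dist (cs n m) (c m) < ε / 2 :=
    (htend m hmI) (Metric.ball_mem_nhds _ (by linarith))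
  obtain ⟨n, hna, hnb, hda, hdb, hdm⟩ := (Ea.and (Eb.and (Da.and (Db.and Dm)))).exists
  have hcons := hcs n a b ha hab hb1 ⟨x, hna, hnb⟩ t ht
  have hbound : dist (L.σ (cs n a) (cs n b) t) (L.σ (c a) (c b) t)
      ≤ max (dist (cs n a) (c a)) (dist (cs n b) (c b)) :=
    dist_sigma_le hL hna hnb hxa hxb ht
  calc dist (c m) (L.σ (c a) (c b) t)
      ≤ dist (c m) (cs n m) + dist (cs n m) (L.σ (c a) (c b) t) := dist_triangle _ _ _
    _ = dist (c m) (cs n m) + dist (L.σ (cs n a) (cs n b) t) (L.σ (c a) (c b) t) := by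
        rw [hcons]
    _ ≤ ε / 2 + max (dist (cs n a) (c a)) (dist (cs n b) (c b)) := by
        have h1 : dist (c m) (cs n m) ≤ ε / 2 := by
          rw [dist_comm]; exact hdm.le
        exact add_le_add h1 hbound
    _ ≤ 0 + ε := by
        have := max_le hda.le hdb.le
        linarith
lemma window {L : LocalGeodesicBicombing X} {c : ℝ → X}
    (hc : ContinuousOn c (Icc (0:ℝ) 1)) (hcons : L.ConsistentWith c)
    {t : ℝ} (ht : t ∈ Icc (0:ℝ) 1) :
    ∃ ε > 0, ∃ v, 0 ≤ v ∧
      ∀ s ∈ Icc (0:ℝ) 1 ∩ Ioo (t - ε) (t + ε), ∀ s' ∈ Icc (0:ℝ) 1 ∩ Ioo (t - ε) (t + ε),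
        dist (c s) (c s') = |s - s'| * v := by
  set x := c t with hx
  have hr : 0 < L.r x := L.r_pos x
  obtain ⟨δ, hδ, hδball⟩ := Metric.continuousWithinAt_iff.1 (hc t ht) (L.r x) hr
  set ε := δ / 2 with hε
  have hε0 : 0 < ε := by positivity
  set a := max (t - ε) 0 with ha
  set b := min (t + ε) 1 with hb
  have hat : a ≤ t := max_le (by linarith) ht.1
  have htb : t ≤ b := le_min (by linarith) ht.2
  have hab : a < b := max_lt (lt_min (by linarith [ht.2]) (by linarith [ht.2]))
      (lt_min (by linarith [ht.1]) one_pos)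
  have haI : a ∈ Icc (0:ℝ) 1 := ⟨le_max_right _ _, hat.trans ht.2⟩
  have hbI : b ∈ Icc (0:ℝ) 1 := ⟨ht.1.trans htb, min_le_right _ _⟩
  have hball : ∀ s ∈ Icc (0:ℝ) 1, a ≤ s → s ≤ b → c s ∈ ball x (L.r x) := by
    intro s hsI hsa hsb
    apply hδball hsI
    have h1 : t - ε ≤ a := le_max_left _ _
    have h2 : b ≤ t + ε := min_le_left _ _
    rw [Real.dist_eq, abs_lt]
    constructor <;> [linarith; linarith]
  have hca : c a ∈ ball x (L.r x) := hball a haI le_rfl hab.le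
  have hcb : c b ∈ ball x (L.r x) := hball b hbI hab.le le_rfl
  have hdom : L.InDom (c a) (c b) := ⟨x, hca, hcb⟩
  have hkey : ∀ s, a ≤ s → s ≤ b → c s = L.σ (c a) (c b) ((s - a) / (b - a)) := by
    intro s hsa hsb
    have hτ : (s - a) / (b - a) ∈ Icc (0:ℝ) 1 :=
      ⟨div_nonneg (by linarith) (by linarith), (div_le_one (by linarith)).2 (by linarith)⟩
    have := hcons a b haI.1 hab.le hbI.2 hdom _ hτ
    have heq : (1 - (s - a) / (b - a)) * a + (s - a) / (b - a) * b = s := by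
      have hmc : (s - a) / (b - a) * (b - a) = s - a :=
        div_mul_cancel₀ _ (by linarith : b - a ≠ 0)
      linear_combination hmc
    rw [heq] at this
    exact this
  refine ⟨ε, hε0, dist (c a) (c b) / (b - a), div_nonneg dist_nonneg (by linarith), ?_⟩
  intro s hs s' hs'
  have hsa : a ≤ s := max_le hs.2.1.le hs.1.1
  have hsb : s ≤ b := le_min hs.2.2.le hs.1.2
  have hsa' : a ≤ s' := max_le hs'.2.1.le hs'.1.1
  have hsb' : s' ≤ b := le_min hs'.2.2.le hs'.1.2
  have hτ : (s - a) / (b - a) ∈ Icc (0:ℝ) 1 :=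
    ⟨div_nonneg (by linarith) (by linarith), (div_le_one (by linarith)).2 (by linarith)⟩
  have hτ' : (s' - a) / (b - a) ∈ Icc (0:ℝ) 1 :=
    ⟨div_nonneg (by linarith) (by linarith), (div_le_one (by linarith)).2 (by linarith)⟩
  rw [hkey s hsa hsb, hkey s' hsa' hsb',
    L.geodesic x (c a) (c b) hca hcb _ hτ _ hτ']
  rw [div_sub_div_same, abs_div, abs_of_pos (by linarith : (0:ℝ) < b - a)]
  have : s - a - (s' - a) = s - s' := by ring
  rw [this]
  ring
lemma constant_speed {L : LocalGeodesicBicombing X} {c : ℝ → X}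
    (hc : ContinuousOn c (Icc (0:ℝ) 1)) (hcons : L.ConsistentWith c) :
    ∃ v, 0 ≤ v ∧ ∀ t ∈ Icc (0:ℝ) 1, ∃ ε > 0,
      ∀ s ∈ Icc (0:ℝ) 1 ∩ Ioo (t - ε) (t + ε), ∀ s' ∈ Icc (0:ℝ) 1 ∩ Ioo (t - ε) (t + ε),
        dist (c s) (c s') = |s - s'| * v := by
  have W := fun (t : ℝ) (ht : t ∈ Icc (0:ℝ) 1) => window hc hcons ht
  choose! ε hε v hv0 hv using W
  -- the local property at the center point
  have mem_self : ∀ t ∈ Icc (0:ℝ) 1, t ∈ Icc (0:ℝ) 1 ∩ Ioo (t - ε t) (t + ε t) := by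
    intro t ht
    exact ⟨ht, by constructor <;> [linarith [hε t ht]; linarith [hε t ht]]⟩
  -- claim A : overlapping windows give equal speeds
  have claimA : ∀ t ∈ Icc (0:ℝ) 1, ∀ t' ∈ Icc (0:ℝ) 1,
      t' ∈ Ioo (t - ε t) (t + ε t) → v t' = v t := by
    intro t ht t' ht' htt'
    set η := min (ε t') (min (t + ε t - t') (t' - (t - ε t))) with hη
    have hη0 : 0 < η := lt_min (hε t' ht') (lt_min (by linarith [htt'.2]) (by linarith [htt'.1]))
    have hηa : η ≤ ε t' := min_le_left _ _
    have hηb : η ≤ t + ε t - t' := (min_le_right _ _).trans (min_le_left _ _)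
    have hηc : η ≤ t' - (t - ε t) := (min_le_right _ _).trans (min_le_right _ _)
    obtain ⟨s, hsI, hslt, hsgt, hsne⟩ :
        ∃ s, s ∈ Icc (0:ℝ) 1 ∧ s < t' + η ∧ t' - η < s ∧ s ≠ t' := by
      by_cases h1 : t' < 1
      · refine ⟨min 1 (t' + η/2), ⟨le_min zero_le_one (by linarith [ht'.1]), min_le_left _ _⟩,
          ?_, ?_, ?_⟩
        · exact lt_of_le_of_lt (min_le_right _ _) (by linarith)
        · have : t' < min 1 (t' + η/2) := lt_min h1 (by linarith)
          linarith
        · have : t' < min 1 (t' + η/2) := lt_min h1 (by linarith)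
          exact this.ne'
      · have h1' : t' = 1 := le_antisymm ht'.2 (not_lt.1 h1)
        refine ⟨max 0 (t' - η/2), ⟨le_max_left _ _, max_le (ht'.1.trans ht'.2) (by linarith [ht'.2])⟩,
          ?_, ?_, ?_⟩
        · have : max 0 (t' - η/2) < t' := max_lt (by rw [h1']; norm_num) (by linarith)
          linarith
        · exact lt_of_lt_of_le (by linarith) (le_max_right _ _)
        · have : max 0 (t' - η/2) < t' := max_lt (by rw [h1']; norm_num) (by linarith)
          exact this.ne
    have hsW : s ∈ Icc (0:ℝ) 1 ∩ Ioo (t - ε t) (t + ε t) :=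
      ⟨hsI, by constructor <;> [linarith; linarith]⟩
    have hsW' : s ∈ Icc (0:ℝ) 1 ∩ Ioo (t' - ε t') (t' + ε t') :=
      ⟨hsI, by constructor <;> [linarith; linarith]⟩
    have ht'W : t' ∈ Icc (0:ℝ) 1 ∩ Ioo (t - ε t) (t + ε t) := ⟨ht', htt'⟩
    have e1 := hv t ht s hsW t' ht'W
    have e2 := hv t' ht' s hsW' t' (mem_self t' ht')
    have habs : |s - t'| ≠ 0 := abs_ne_zero.2 (sub_ne_zero.2 hsne)
    have := e1.symm.trans e2
    exact (mul_left_cancel₀ habs this).symm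
  -- the speed function, extended to ℝ by clamping, is locally constant
  set g : ℝ → ℝ := fun u => v ((projIcc (0:ℝ) 1 zero_le_one u : Icc (0:ℝ) 1) : ℝ) with hg
  have hgl : IsLocallyConstant g := by
    rw [IsLocallyConstant.iff_eventually_eq]
    intro u
    set p : ℝ := ((projIcc (0:ℝ) 1 zero_le_one u : Icc (0:ℝ) 1) : ℝ) with hp
    have hpI : p ∈ Icc (0:ℝ) 1 := (projIcc (0:ℝ) 1 zero_le_one u).2
    rw [Metric.eventually_nhds_iff]
    refine ⟨ε p, hε p hpI, ?_⟩
    intro y hy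
    set q : ℝ := ((projIcc (0:ℝ) 1 zero_le_one y : Icc (0:ℝ) 1) : ℝ) with hq
    have hqI : q ∈ Icc (0:ℝ) 1 := (projIcc (0:ℝ) 1 zero_le_one y).2
    have hlip : dist q p ≤ dist y u := by
      have := (LipschitzWith.projIcc (zero_le_one' ℝ)).dist_le_mul y u
      rw [Subtype.dist_eq] at this
      simpa using this
    have hqmem : q ∈ Ioo (p - ε p) (p + ε p) := by
      have : |q - p| < ε p := lt_of_le_of_lt (by rw [← Real.dist_eq]; exact hlip) hy
      rw [abs_lt] at this
      constructor <;> [linarith [this.1]; linarith [this.2]]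
    exact claimA p hpI q hqI hqmem
  -- conclude: all local speeds are equal
  refine ⟨v 0, hv0 0 ⟨le_rfl, zero_le_one⟩, ?_⟩
  intro t ht
  have hvt : v t = v 0 := by
    have := hgl.apply_eq_of_preconnectedSpace t 0
    simp only [hg] at this
    rwa [projIcc_of_mem zero_le_one ht, projIcc_of_mem zero_le_one ⟨le_rfl, zero_le_one⟩] at this
  exact ⟨ε t, hε t ht, by rw [← hvt]; exact hv t ht⟩
lemma uniform_speed {c : ℝ → X} {v : ℝ}
    (h : ∀ t ∈ Icc (0:ℝ) 1, ∃ ε > 0,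
      ∀ s ∈ Icc (0:ℝ) 1 ∩ Ioo (t - ε) (t + ε), ∀ s' ∈ Icc (0:ℝ) 1 ∩ Ioo (t - ε) (t + ε),
        dist (c s) (c s') = |s - s'| * v) :
    ∃ δ > 0, ∀ s ∈ Icc (0:ℝ) 1, ∀ s' ∈ Icc (0:ℝ) 1, |s - s'| < δ →
      dist (c s) (c s') = |s - s'| * v := by
  choose! ε hε hloc using h
  obtain ⟨δ, hδ0, hδ⟩ := lebesgue_number_lemma_of_metric (isCompact_Icc (a := (0:ℝ)) (b := 1))
    (c := fun t : Icc (0:ℝ) 1 => Ioo ((t : ℝ) - ε t) ((t : ℝ) + ε t))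
    (fun t => isOpen_Ioo)
    (by
      intro t ht
      refine mem_iUnion.2 ⟨⟨t, ht⟩, ?_⟩
      have := hε t ht
      exact ⟨by linarith, by linarith⟩)
  refine ⟨δ, hδ0, ?_⟩
  intro s hs s' hs' hss'
  obtain ⟨i, hi⟩ := hδ s hs
  have hsmem : s ∈ Ioo ((i : ℝ) - ε i) ((i : ℝ) + ε i) := hi (mem_ball_self hδ0)
  have hs'mem : s' ∈ Ioo ((i : ℝ) - ε i) ((i : ℝ) + ε i) := by
    apply hi
    rw [mem_ball, Real.dist_eq, abs_sub_comm]
    exact hss'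
  exact hloc i i.2 s ⟨hs, hsmem⟩ s' ⟨hs', hs'mem⟩
lemma piece_var {c : ℝ → X} {v α β : ℝ} (hv : 0 ≤ v) (hαβ : α ≤ β)
    (h : ∀ s ∈ Icc α β, ∀ s' ∈ Icc α β, dist (c s) (c s') = |s - s'| * v) :
    eVariationOn c (Icc α β) = ENNReal.ofReal (v * (β - α)) := by
  apply le_antisymm
  · refine iSup_le ?_
    rintro ⟨n, u, hu, us⟩
    have key : ∀ i, edist (c (u (i + 1))) (c (u i))
        = ENNReal.ofReal ((u (i + 1) - u i) * v) := by
      intro i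
      rw [edist_dist, h (u (i+1)) (us (i+1)) (u i) (us i),
        abs_of_nonneg (sub_nonneg.2 (hu (Nat.le_succ i)))]
    calc (∑ i ∈ Finset.range n, edist (c (u (i + 1))) (c (u i)))
        = ∑ i ∈ Finset.range n, ENNReal.ofReal ((u (i + 1) - u i) * v) := by
          exact Finset.sum_congr rfl fun i _ => key i
      _ = ENNReal.ofReal (∑ i ∈ Finset.range n, (u (i + 1) - u i) * v) := by
          rw [ENNReal.ofReal_sum_of_nonneg]
          intro i _
          exact mul_nonneg (sub_nonneg.2 (hu (Nat.le_succ i))) hv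
      _ ≤ ENNReal.ofReal (v * (β - α)) := by
          apply ENNReal.ofReal_le_ofReal
          rw [← Finset.sum_mul, Finset.sum_range_sub]
          have h1 : u n - u 0 ≤ β - α := by
            have := (us n).2
            have := (us 0).1
            linarith
          nlinarith
  · have := eVariationOn.edist_le c (right_mem_Icc.2 hαβ) (left_mem_Icc.2 hαβ)
    refine le_trans ?_ this
    rw [edist_dist, h β (right_mem_Icc.2 hαβ) α (left_mem_Icc.2 hαβ),
      abs_of_nonneg (sub_nonneg.2 hαβ)]
    rw [mul_comm]
lemma total_var {c : ℝ → X} {v δ : ℝ} (hv : 0 ≤ v) (hδ : 0 < δ)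
    (h : ∀ s ∈ Icc (0:ℝ) 1, ∀ s' ∈ Icc (0:ℝ) 1, |s - s'| < δ →
      dist (c s) (c s') = |s - s'| * v) :
    eVariationOn c (Icc (0:ℝ) 1) = ENNReal.ofReal v := by
  obtain ⟨n, hn⟩ := exists_nat_one_div_lt hδ
  set N : ℕ := n + 1 with hN
  have hN0 : 0 < (N : ℝ) := by positivity
  have hNδ : 1 / (N : ℝ) < δ := by exact_mod_cast hn
  have key : ∀ k : ℕ, k ≤ N →
      eVariationOn c (Icc (0:ℝ) ((k : ℝ) / N)) = ENNReal.ofReal (v * ((k : ℝ) / N)) := by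
    intro k hk
    induction k with
    | zero =>
      simp only [Nat.cast_zero, zero_div, mul_zero, ENNReal.ofReal_zero]
      exact eVariationOn.subsingleton c (by simp [Icc_self])
    | succ k ih =>
      have hk' : k ≤ N := Nat.le_of_succ_le hk
      have ihk := ih hk'
      have h0k : (0:ℝ) ≤ (k:ℝ)/N := by positivity
      have hkk1 : (k:ℝ)/N ≤ ((k:ℝ)+1)/N := by gcongr; linarith
      have hk11 : ((k:ℝ)+1)/N ≤ 1 := by
        rw [div_le_one hN0]
        exact_mod_cast hk
      have hIcc := eVariationOn.Icc_add_Icc c (s := Icc (0:ℝ) (((k:ℝ)+1)/N)) h0k hkk1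
        ⟨h0k, hkk1⟩
      have e1 : Icc (0:ℝ) (((k:ℝ)+1)/N) ∩ Icc 0 ((k:ℝ)/N) = Icc (0:ℝ) ((k:ℝ)/N) :=
        inter_eq_self_of_subset_right (Icc_subset_Icc le_rfl hkk1)
      have e2 : Icc (0:ℝ) (((k:ℝ)+1)/N) ∩ Icc ((k:ℝ)/N) (((k:ℝ)+1)/N)
          = Icc ((k:ℝ)/N) (((k:ℝ)+1)/N) :=
        inter_eq_self_of_subset_right (Icc_subset_Icc h0k le_rfl)
      have e3 : Icc (0:ℝ) (((k:ℝ)+1)/N) ∩ Icc (0:ℝ) (((k:ℝ)+1)/N)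
          = Icc (0:ℝ) (((k:ℝ)+1)/N) := inter_self _
      have hpiece : eVariationOn c (Icc ((k:ℝ)/N) (((k:ℝ)+1)/N))
          = ENNReal.ofReal (v * (((k:ℝ)+1)/N - (k:ℝ)/N)) := by
        apply piece_var hv hkk1
        intro s hs s' hs'
        have hsI : s ∈ Icc (0:ℝ) 1 := ⟨h0k.trans hs.1, hs.2.trans hk11⟩
        have hs'I : s' ∈ Icc (0:ℝ) 1 := ⟨h0k.trans hs'.1, hs'.2.trans hk11⟩
        have habs : |s - s'| ≤ 1 / N := by
          rw [abs_le]
          constructor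
          · have := hs.1; have := hs'.2
            have hd : ((k:ℝ)+1)/N - (k:ℝ)/N = 1/N := by ring
            linarith [hs.1, hs'.2]
          · have hd : ((k:ℝ)+1)/N - (k:ℝ)/N = 1/N := by ring
            linarith [hs.2, hs'.1]
        exact h s hsI s' hs'I (lt_of_le_of_lt habs hNδ)
      rw [e1, e2, e3] at hIcc
      have cast1 : ((k+1 : ℕ) : ℝ) = (k:ℝ) + 1 := by push_cast; ring
      rw [cast1, ← hIcc, ihk, hpiece,
        ← ENNReal.ofReal_add (mul_nonneg hv h0k) (mul_nonneg hv (by linarith))]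
      congr 1
      ring
  have hfin := key N le_rfl
  rw [div_self (ne_of_gt hN0)] at hfin
  rw [hfin, mul_one]
lemma isLocalGeodesic_of_consistent {L : LocalGeodesicBicombing X} {c : ℝ → X}
    (hc : ContinuousOn c (Icc (0:ℝ) 1)) (hcons : L.ConsistentWith c) :
    IsLocalGeodesic c := by
  obtain ⟨v, hv0, hloc⟩ := constant_speed hc hcons
  obtain ⟨δ, hδ0, hunif⟩ := uniform_speed hloc
  have hlen : curveLength c = v := by
    rw [curveLength, total_var hv0 hδ0 hunif, ENNReal.toReal_ofReal hv0]
  intro t ht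
  obtain ⟨ε, hε, hl⟩ := hloc t ht
  exact ⟨ε, hε, fun s hs s' hs' => by rw [hl s hs s' hs', hlen]⟩

end Aux

/-- The metric space `(X̃_{x₀}, D)` is complete. -/
theorem Xtilde_completeSpace
    {X : Type*} [MetricSpace X] [CompleteSpace X]
    (L : LocalGeodesicBicombing X) (hL : L.IsConvex) (x₀ : X) :
    CompleteSpace (Xtilde L x₀) := by
  have hclosed : IsClosed {f : C(Icc (0:ℝ) 1, X) |
      IsLocalGeodesic (IccExtend (zero_le_one' ℝ) f) ∧
      L.ConsistentWith (IccExtend (zero_le_one' ℝ) f) ∧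
      IccExtend (zero_le_one' ℝ) f 0 = x₀} := by
    apply IsSeqClosed.isClosed
    intro fs f hfs hconv
    have hpt : ∀ t ∈ Icc (0:ℝ) 1, Filter.Tendsto (fun n => IccExtend (zero_le_one' ℝ) (fs n) t)
        Filter.atTop (nhds (IccExtend (zero_le_one' ℝ) f t)) := by
      intro t _
      exact ((ContinuousEvalConst.continuous_eval_const
        (projIcc 0 1 (zero_le_one' ℝ) t)).tendsto f).comp hconv
    have hcont : ContinuousOn (IccExtend (zero_le_one' ℝ) f) (Icc (0:ℝ) 1) :=
      (f.continuous.comp continuous_projIcc).continuousOn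
    have hcons : L.ConsistentWith (IccExtend (zero_le_one' ℝ) f) :=
      consistentWith_of_tendsto hL (fun n => (hfs n).2.1) hpt
    refine ⟨isLocalGeodesic_of_consistent hcont hcons, hcons, ?_⟩
    have h0 := hpt 0 ⟨le_rfl, zero_le_one⟩
    simp only [fun n => (hfs n).2.2] at h0
    exact (tendsto_nhds_unique tendsto_const_nhds h0).symm
  exact hclosed.completeSpace_coe
end

section
/- Let X be an absolute 1-Lipschitz neighborhood retract. Then X is locally hyperconvex: for every x ∈ X there exists r_x > 0 such that the closed ball B(x,r_x) is hyperconvex. Moreover, if X is an absolute 1-Lipschitz uniform neighborhood retract, then X is uniformly locally hyperconvex: there exists r > 0 such that B(x,r) is hyperconvex for every x ∈ X. -/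
open Set Metric

universe u

/-- A metric space `X` is hyperconvex if every family of closed balls `B(x i, r i)` with
`d(x i, x j) ≤ r i + r j` for all `i, j` has nonempty intersection. -/
def Hyperconvex (X : Type u) [MetricSpace X] : Prop :=
  ∀ (ι : Type u) (x : ι → X) (r : ι → ℝ),
    (∀ i, 0 ≤ r i) → (∀ i j, dist (x i) (x j) ≤ r i + r j) →
    (⋂ i, closedBall (x i) (r i)).Nonempty

/-- `X` is an absolute 1-Lipschitz neighborhood retract: for every metric space `Y` and
every isometric embedding `i : X → Y` there is an open neighborhood `U` of `i(X)` in `Y`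
and a 1-Lipschitz retraction `ρ : U → i(X)`. -/
def IsAbs1LipNbhdRetract (X : Type u) [MetricSpace X] : Prop :=
  ∀ (Y : Type u) [MetricSpace Y], ∀ i : X → Y, Isometry i →
    ∃ U : Set Y, IsOpen U ∧ Set.range i ⊆ U ∧
      ∃ ρ : U → Y, LipschitzWith 1 ρ ∧ (∀ u : U, ρ u ∈ Set.range i) ∧
        ∀ (x : X) (h : i x ∈ U), ρ ⟨i x, h⟩ = i x

/-- `X` is an absolute 1-Lipschitz uniform neighborhood retract: for every metric space `Y`
and every isometric embedding `i : X → Y` there are `ε > 0` and a 1-Lipschitz retraction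
`ρ : U → i(X)` where `U = {y ∈ Y : dist(y, i(X)) < ε}`. -/
def IsAbs1LipUnifNbhdRetract (X : Type u) [MetricSpace X] : Prop :=
  ∀ (Y : Type u) [MetricSpace Y], ∀ i : X → Y, Isometry i →
    ∃ ε > (0:ℝ), ∃ ρ : {y : Y // infDist y (Set.range i) < ε} → Y,
      LipschitzWith 1 ρ ∧ (∀ u, ρ u ∈ Set.range i) ∧
        ∀ (x : X) (h : infDist (i x) (Set.range i) < ε), ρ ⟨i x, h⟩ = i x

section Aux

variable {X : Type u} [MetricSpace X]

/-- A Kuratowski-type isometric embedding of `X` into the bounded continuous real-valued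
functions on `X`, relative to a base point `x₀`. -/
noncomputable def kur (x₀ : X) (y : X) : BoundedContinuousFunction X ℝ :=
  BoundedContinuousFunction.mkOfBound
    ⟨fun t => dist y t - dist x₀ t,
      ((continuous_const.dist continuous_id).sub (continuous_const.dist continuous_id))⟩
    (2 * dist y x₀) (by
      intro s t
      have h1 : |dist y s - dist x₀ s| ≤ dist y x₀ := abs_dist_sub_le y x₀ s
      have h2 : |dist y t - dist x₀ t| ≤ dist y x₀ := abs_dist_sub_le y x₀ t
      simp only [Real.dist_eq]
      calc |(dist y s - dist x₀ s) - (dist y t - dist x₀ t)|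
          ≤ |dist y s - dist x₀ s| + |dist y t - dist x₀ t| := abs_sub _ _
        _ ≤ 2 * dist y x₀ := by linarith)

@[simp] lemma kur_apply (x₀ y t : X) : kur x₀ y t = dist y t - dist x₀ t := rfl

lemma kur_isometry (x₀ : X) : Isometry (kur x₀) := by
  intro y z
  rw [edist_dist, edist_dist]
  congr 1
  apply le_antisymm
  · refine BoundedContinuousFunction.dist_le dist_nonneg |>.2 fun t => ?_
    simp only [kur_apply, Real.dist_eq]
    have : (dist y t - dist x₀ t) - (dist z t - dist x₀ t) = dist y t - dist z t := by ring
    rw [this]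
    exact abs_dist_sub_le y z t
  · have := BoundedContinuousFunction.dist_coe_le_dist (f := kur x₀ y) (g := kur x₀ z) z
    simp only [kur_apply, Real.dist_eq, dist_self, sub_zero] at this
    calc dist y z = |dist y z - dist x₀ z - (0 - dist x₀ z)| := by
          ring_nf; exact (abs_of_nonneg dist_nonneg).symm
      _ ≤ _ := this

lemma kur_key_fun (x₀ : X) {ι : Type u} [Nonempty ι] (c : ι → X) (s : ι → ℝ)
    (hd : ∀ j k, dist (c j) (c k) ≤ s j + s k) :
    ∃ p : X → ℝ, (∃ C, ∀ t t', dist (p t) (p t') ≤ C) ∧ Continuous p ∧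
      ∀ j t, |p t - (dist (c j) t - dist x₀ t)| ≤ s j := by
  set g : ι → X → ℝ := fun j t => dist (c j) t - dist x₀ t - s j with hg
  have key : ∀ j k t, g j t ≤ dist (c k) t - dist x₀ t + s k := by
    intro j k t
    have h1 : dist (c j) t ≤ dist (c j) (c k) + dist (c k) t := dist_triangle _ _ _
    have h2 := hd j k
    simp only [hg]
    linarith
  obtain ⟨j₀⟩ := ‹Nonempty ι›
  have bdd : ∀ t, BddAbove (range fun j => g j t) := by
    intro t
    exact ⟨dist (c j₀) t - dist x₀ t + s j₀, by rintro _ ⟨j, rfl⟩; exact key j j₀ t⟩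
  set p : X → ℝ := fun t => ⨆ j, g j t with hp
  have hub : ∀ j t, g j t ≤ p t := fun j t => le_ciSup (bdd t) j
  have hlb : ∀ j t, p t ≤ dist (c j) t - dist x₀ t + s j := by
    intro j t
    exact ciSup_le fun k => key k j t
  have habs : ∀ j t, |p t - (dist (c j) t - dist x₀ t)| ≤ s j := by
    intro j t
    rw [abs_sub_le_iff]
    constructor
    · have := hlb j t; linarith
    · have := hub j t; simp only [hg] at this; linarith
  have hlip : ∀ t t', p t ≤ p t' + 2 * dist t t' := by
    intro t t'
    refine ciSup_le fun j => ?_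
    have h1 : dist (c j) t ≤ dist (c j) t' + dist t' t := dist_triangle _ _ _
    have h2 : dist x₀ t' ≤ dist x₀ t + dist t t' := dist_triangle _ _ _
    have h3 := hub j t'
    simp only [hg] at h3 ⊢
    rw [dist_comm t' t] at h1
    linarith
  have hdist : ∀ t t', dist (p t) (p t') ≤ 2 * dist t t' := by
    intro t t'
    rw [Real.dist_eq, abs_sub_le_iff]
    constructor
    · have := hlip t t'; linarith
    · have := hlip t' t; rw [dist_comm t' t] at this; linarith
  have hcont : Continuous p :=
    (LipschitzWith.of_dist_le_mul (K := 2) (by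
      intro t t'; simpa using hdist t t')).continuous
  refine ⟨p, ⟨2 * (dist (c j₀) x₀ + s j₀), ?_⟩, hcont, habs⟩
  intro t t'
  have hb : ∀ u, |p u| ≤ dist (c j₀) x₀ + s j₀ := by
    intro u
    have h1 := habs j₀ u
    have h2 : |dist (c j₀) u - dist x₀ u| ≤ dist (c j₀) x₀ := abs_dist_sub_le _ _ _
    calc |p u| = |(p u - (dist (c j₀) u - dist x₀ u)) + (dist (c j₀) u - dist x₀ u)| := by ring_nf
      _ ≤ |p u - (dist (c j₀) u - dist x₀ u)| + |dist (c j₀) u - dist x₀ u| := abs_add_le _ _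
      _ ≤ _ := by linarith
  rw [Real.dist_eq]
  calc |p t - p t'| ≤ |p t| + |p t'| := abs_sub _ _
    _ ≤ _ := by have := hb t; have := hb t'; linarith

/-- The key lemma: in the bounded continuous functions, any admissible family of balls
centered at points of the image of `kur x₀` has a common point. -/
lemma kur_key (x₀ : X) {ι : Type u} [Nonempty ι] (c : ι → X) (s : ι → ℝ)
    (hs : ∀ j, 0 ≤ s j) (hd : ∀ j k, dist (c j) (c k) ≤ s j + s k) :
    ∃ p : BoundedContinuousFunction X ℝ, ∀ j, dist p (kur x₀ (c j)) ≤ s j := by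
  obtain ⟨p, ⟨C, hC⟩, hcont, habs⟩ := kur_key_fun x₀ c s hd
  refine ⟨BoundedContinuousFunction.mkOfBound ⟨p, hcont⟩ C hC, fun j => ?_⟩
  refine BoundedContinuousFunction.dist_le (hs j) |>.2 fun t => ?_
  show dist (p t) (dist (c j) t - dist x₀ t) ≤ s j
  rw [Real.dist_eq]
  exact habs j t

/-- If small perturbations of `kur x₀ x` can be "retracted" back into `X` in a 1-Lipschitz
way, then the closed ball `B(x,r)` is hyperconvex. -/
lemma hyper_of_retr (x₀ x : X) (r : ℝ) (hr : 0 < r)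
    (H : ∀ p : BoundedContinuousFunction X ℝ, dist p (kur x₀ x) ≤ r →
      ∃ z : X, ∀ y : X, dist z y ≤ dist p (kur x₀ y)) :
    Hyperconvex (closedBall x r) := by
  intro ι y rr hnn hpair
  set c : Option ι → X := fun o => o.elim x (fun j => (y j : X)) with hc
  set s : Option ι → ℝ := fun o => o.elim r (fun j => min (rr j) (2 * r)) with hsdef
  have hyball : ∀ j, dist (y j : X) x ≤ r := fun j => (y j).2
  have hs : ∀ o, 0 ≤ s o := by
    rintro (_ | j)
    · exact hr.le
    · exact le_min (hnn j) (by positivity)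
  have hd : ∀ o o', dist (c o) (c o') ≤ s o + s o' := by
    rintro (_ | j) (_ | k)
    · simp [hc, hsdef]; linarith
    · simp only [hc, hsdef, Option.elim]
      rw [dist_comm]
      have := hyball k
      have : (0:ℝ) ≤ min (rr k) (2*r) := hs (some k)
      calc dist (y k : X) x ≤ r := hyball k
        _ ≤ r + min (rr k) (2*r) := by linarith
    · simp only [hc, hsdef, Option.elim]
      have h0 : (0:ℝ) ≤ min (rr j) (2*r) := hs (some j)
      calc dist (y j : X) x ≤ r := hyball j
        _ ≤ min (rr j) (2*r) + r := by linarith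
    · simp only [hc, hsdef, Option.elim]
      have hjk : dist (y j : X) (y k : X) ≤ 2 * r := by
        calc dist (y j : X) (y k : X) ≤ dist (y j : X) x + dist x (y k : X) := dist_triangle _ _ _
          _ ≤ r + r := by
              have := hyball j
              have := hyball k
              rw [dist_comm x (y k : X)]
              linarith
          _ = 2 * r := by ring
      have hjk' : dist (y j : X) (y k : X) ≤ rr j + rr k := by
        have := hpair j k
        rwa [Subtype.dist_eq] at this
      rcases le_total (rr j) (2*r) with h1 | h1 <;> rcases le_total (rr k) (2*r) with h2 | h2
      · rw [min_eq_left h1, min_eq_left h2]; exact hjk'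
      · rw [min_eq_left h1, min_eq_right h2]
        have := hnn j
        linarith
      · rw [min_eq_right h1, min_eq_left h2]
        have := hnn k
        linarith
      · rw [min_eq_right h1, min_eq_right h2]
        linarith
  obtain ⟨p, hp⟩ := kur_key x₀ c s hs hd
  have hpx : dist p (kur x₀ x) ≤ r := hp none
  obtain ⟨z, hz⟩ := H p hpx
  have hzx : z ∈ closedBall x r := by
    rw [mem_closedBall]
    exact (hz x).trans hpx
  refine ⟨⟨z, hzx⟩, ?_⟩
  rw [mem_iInter]
  intro j
  rw [mem_closedBall, Subtype.dist_eq]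
  calc dist z (y j : X) ≤ dist p (kur x₀ (y j : X)) := hz _
    _ ≤ min (rr j) (2 * r) := hp (some j)
    _ ≤ rr j := min_le_left _ _

end Aux

/-- An absolute 1-Lipschitz neighborhood retract is locally hyperconvex, and an absolute
1-Lipschitz uniform neighborhood retract is uniformly locally hyperconvex. -/
theorem locally_hyperconvex_of_abs1LipNbhdRetract {X : Type u} [MetricSpace X] :
    (IsAbs1LipNbhdRetract X → ∀ x : X, ∃ r > (0:ℝ), Hyperconvex (closedBall x r)) ∧
    (IsAbs1LipUnifNbhdRetract X → ∃ r > (0:ℝ), ∀ x : X, Hyperconvex (closedBall x r)) := by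
  constructor
  · intro hX x
    obtain ⟨U, hUopen, hUrange, ρ, hρlip, hρrange, hρfix⟩ :=
      hX (BoundedContinuousFunction X ℝ) (kur x) (kur_isometry x)
    have hxU : kur x x ∈ U := hUrange (mem_range_self x)
    obtain ⟨δ, hδ, hball⟩ := Metric.isOpen_iff.1 hUopen _ hxU
    refine ⟨δ / 2, by positivity, hyper_of_retr x x (δ / 2) (by positivity) ?_⟩
    intro p hp
    have hpU : p ∈ U := hball (by rw [mem_ball]; linarith)
    obtain ⟨z, hz⟩ := hρrange ⟨p, hpU⟩
    refine ⟨z, fun y => ?_⟩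
    have hyU : kur x y ∈ U := hUrange (mem_range_self y)
    have hlip := hρlip.dist_le_mul ⟨p, hpU⟩ ⟨kur x y, hyU⟩
    rw [hρfix y hyU, ← hz] at hlip
    have hiso : dist (kur x z) (kur x y) = dist z y := (kur_isometry x).dist_eq z y
    rw [hiso] at hlip
    simpa [Subtype.dist_eq] using hlip
  · intro hX
    rcases isEmpty_or_nonempty X with hE | hNE
    · exact ⟨1, one_pos, fun x => (hE.false x).elim⟩
    · obtain ⟨x₀⟩ := hNE
      obtain ⟨ε, hε, ρ, hρlip, hρrange, hρfix⟩ :=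
        hX (BoundedContinuousFunction X ℝ) (kur x₀) (kur_isometry x₀)
      refine ⟨ε / 2, by positivity, fun x => hyper_of_retr x₀ x (ε / 2) (by positivity) ?_⟩
      intro p hp
      have hpU : infDist p (range (kur x₀)) < ε := by
        have h1 : infDist p (range (kur x₀)) ≤ dist p (kur x₀ x) :=
          infDist_le_dist_of_mem (mem_range_self x)
        linarith
      obtain ⟨z, hz⟩ := hρrange ⟨p, hpU⟩
      refine ⟨z, fun y => ?_⟩
      have hyU : infDist (kur x₀ y) (range (kur x₀)) < ε := by
        have : infDist (kur x₀ y) (range (kur x₀)) = 0 :=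
          infDist_zero_of_mem (mem_range_self y)
        linarith
      have hlip := hρlip.dist_le_mul ⟨p, hpU⟩ ⟨kur x₀ y, hyU⟩
      rw [hρfix y hyU, ← hz] at hlip
      have hiso : dist (kur x₀ z) (kur x₀ y) = dist z y := (kur_isometry x₀).dist_eq z y
      rw [hiso] at hlip
      simpa [Subtype.dist_eq] using hlip
end

section
/- Let S¹ denote the circle of circumference 2π with its inner (intrinsic) metric, realized as the quotient metric space ℝ/2πℤ (i.e. AddCircle (2π) with the quotient metric). Then S¹ is not an absolute 1-Lipschitz neighborhood retract: there exist a metric space Y and an isometric embedding i : S¹ → Y such that for every open set U with i(S¹) ⊆ U ⊆ Y there is no 1-Lipschitz map ρ : U → i(S¹) with ρ(i(x)) = i(x) for all x ∈ S¹. -/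
open Set Metric

universe u

noncomputable section

namespace CNR

abbrev S : Type := AddCircle (2 * Real.pi)

instance : Fact (0 < 2 * Real.pi) := ⟨by positivity⟩

lemma tp_pos : (0:ℝ) < 2 * Real.pi := by positivity

lemma half_tp : |2 * Real.pi| / 2 = Real.pi := by rw [abs_of_pos tp_pos]; ring

lemma dist_le_pi (x y : S) : dist x y ≤ Real.pi := by
  rw [dist_eq_norm]
  have := AddCircle.norm_le_half_period (p := 2 * Real.pi) (x := x - y) tp_pos.ne'
  rwa [half_tp] at this

lemma dist_coe_eq {s t : ℝ} (h : |s - t| ≤ Real.pi) :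
    dist (s : S) (t : S) = |s - t| := by
  rw [dist_eq_norm, ← AddCircle.coe_sub,
    (AddCircle.norm_coe_eq_abs_iff (p := 2*Real.pi) tp_pos.ne').2 (by rwa [half_tp])]

/-- The representative of `z : ℝ/2πℤ` in `[-π, π)`. -/
def rep (z : S) : ℝ := (AddCircle.equivIco (2*Real.pi) (-Real.pi) z : ℝ)

lemma rep_coe (z : S) : ((rep z : ℝ) : S) = z :=
  (AddCircle.equivIco (2*Real.pi) (-Real.pi)).symm_apply_apply z

lemma rep_mem (z : S) : rep z ∈ Ico (-Real.pi) Real.pi := by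
  have h := (AddCircle.equivIco (2*Real.pi) (-Real.pi) z).2
  unfold rep
  exact ⟨h.1, by linarith [h.2]⟩

lemma abs_rep (z : S) : |rep z| = ‖z‖ := by
  have h := rep_mem z
  conv_rhs => rw [← rep_coe z]
  rw [(AddCircle.norm_coe_eq_abs_iff (p := 2*Real.pi) tp_pos.ne').2 (by
    rw [half_tp, abs_le]; exact ⟨h.1, h.2.le⟩)]

/-- The "angular discrepancy" of `g` at `t`, as a real in `[-π, π)`. -/
def srep (g : S → S) (t : ℝ) : ℝ := rep (g ↑t - ↑t)

/-- The lift of `g` to `ℝ` relative to the identity. -/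
def Gf (g : S → S) (t : ℝ) : ℝ := t + srep g t

/-- There is no strictly contracting self-map of the circle uniformly close to the identity:
such a map would lift to a map `G : ℝ → ℝ` with `G(2π) - G(0) = 2π` which is `λ`-Lipschitz
on pieces of length `π/2`, giving `2π ≤ 2πλ < 2π`. -/
lemma no_contraction (g : S → S) (lam eps : ℝ) (hlam : lam < 1)
    (heps : eps ≤ Real.pi/4)
    (hg : ∀ x y : S, dist (g x) (g y) ≤ lam * dist x y)
    (hc : ∀ x : S, dist (g x) x ≤ eps) : False := by
  have hπ : (0:ℝ) < Real.pi := Real.pi_pos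
  have heps0 : 0 ≤ eps := le_trans dist_nonneg (hc 0)
  have hlam0 : 0 ≤ lam := by
    by_contra h
    push_neg at h
    have h2 := hg (((0:ℝ)) : S) (((Real.pi : ℝ)) : S)
    have hd : dist (((0:ℝ)) : S) ((Real.pi : ℝ) : S) = Real.pi := by
      have := dist_coe_eq (s := (0:ℝ)) (t := Real.pi)
        (by rw [abs_of_nonpos] <;> linarith)
      rw [this, abs_of_nonpos] <;> linarith
    rw [hd] at h2
    nlinarith [(dist_nonneg : (0:ℝ) ≤ dist (g (((0:ℝ)):S)) (g (((Real.pi:ℝ)):S))), h2]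
  have hsbound : ∀ t, |srep g t| ≤ eps := by
    intro t
    rw [srep, abs_rep, ← dist_eq_norm]
    exact hc _
  have hGcoe : ∀ t, ((Gf g t : ℝ) : S) = g ↑t := by
    intro t
    rw [Gf, AddCircle.coe_add, srep, rep_coe]
    abel
  have hper : srep g (0 + 2*Real.pi) = srep g 0 := by
    rw [srep, srep, AddCircle.coe_add_period]
  have key : ∀ t t', |t - t'| ≤ Real.pi/2 → |Gf g t - Gf g t'| ≤ lam * |t - t'| := by
    intro t t' h
    have h1 : |Gf g t - Gf g t'| ≤ Real.pi := by
      have he : Gf g t - Gf g t' = (t - t') + (srep g t - srep g t') := by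
        rw [Gf, Gf]; ring
      rw [he]
      calc |(t - t') + (srep g t - srep g t')|
          ≤ |t - t'| + |srep g t - srep g t'| := abs_add_le _ _
        _ ≤ |t - t'| + (|srep g t| + |srep g t'|) := by
            linarith [abs_sub (srep g t) (srep g t')]
        _ ≤ Real.pi := by linarith [hsbound t, hsbound t']
    have h2 : dist ((Gf g t : ℝ) : S) ((Gf g t' : ℝ) : S) = |Gf g t - Gf g t'| :=
      dist_coe_eq h1
    have h3 : dist ((t : ℝ) : S) ((t' : ℝ) : S) = |t - t'| := dist_coe_eq (by linarith)
    rw [hGcoe, hGcoe] at h2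
    have h4 := hg ↑t ↑t'
    rw [h3, h2] at h4
    exact h4
  have chunk : ∀ a b : ℝ, |a - b| ≤ Real.pi/2 → Gf g a - Gf g b ≤ lam * (Real.pi/2) := by
    intro a b hab
    calc Gf g a - Gf g b ≤ |Gf g a - Gf g b| := le_abs_self _
      _ ≤ lam * |a - b| := key a b hab
      _ ≤ lam * (Real.pi/2) := by nlinarith [abs_nonneg (a-b)]
  have h01 := chunk (Real.pi/2) 0 (by rw [sub_zero, abs_of_nonneg (by linarith)])
  have h12 := chunk Real.pi (Real.pi/2)
    (by rw [show Real.pi - Real.pi/2 = Real.pi/2 by ring, abs_of_nonneg (by linarith)])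
  have h23 := chunk (3*Real.pi/2) Real.pi
    (by rw [show 3*Real.pi/2 - Real.pi = Real.pi/2 by ring, abs_of_nonneg (by linarith)])
  have h34 := chunk (2*Real.pi) (3*Real.pi/2)
    (by rw [show 2*Real.pi - 3*Real.pi/2 = Real.pi/2 by ring, abs_of_nonneg (by linarith)])
  have hend : Gf g (2*Real.pi) - Gf g 0 = 2*Real.pi := by
    have h5 : Gf g (0 + 2*Real.pi) = 0 + 2*Real.pi + srep g (0 + 2*Real.pi) := rfl
    rw [hper] at h5
    rw [show (2*Real.pi : ℝ) = 0 + 2*Real.pi by ring, h5, Gf]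
    ring
  have hh : lam * (Real.pi/2) < Real.pi/2 := by nlinarith
  linarith

/-- Gluing parameter: `e 0 = 0` (the base circle), `e n = 1/(n+1)` for `n ≥ 1`. -/
def e (n : ℕ) : ℝ := if n = 0 then 0 else 1 / (n + 1)

lemma e_zero : e 0 = 0 := if_pos rfl

lemma e_nonneg (n : ℕ) : 0 ≤ e n := by
  unfold e; split
  · exact le_refl 0
  · positivity

lemma e_le_half (n : ℕ) : e n ≤ 1/2 := by
  unfold e; split
  · norm_num
  · rw [div_le_div_iff₀ (by positivity) (by norm_num)]
    have : (1:ℝ) ≤ (n:ℝ) := by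
      have : 1 ≤ n := Nat.one_le_iff_ne_zero.2 (by assumption)
      exact_mod_cast this
    linarith

lemma e_pos {n : ℕ} (h : n ≠ 0) : 0 < e n := by
  unfold e; rw [if_neg h]; positivity

lemma e_succ (N : ℕ) : e (N+1) = 1/((N:ℝ)+2) := by
  unfold e; rw [if_neg (Nat.succ_ne_zero N)]; push_cast; ring_nf

/-- Contraction factor of the `n`-th glued circle. -/
def lam (n : ℕ) : ℝ := 1 - e n

lemma lam_le_one (n : ℕ) : lam n ≤ 1 := by unfold lam; linarith [e_nonneg n]
lemma lam_pos (n : ℕ) : 0 < lam n := by unfold lam; linarith [e_le_half n]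
lemma lam_zero : lam 0 = 1 := by unfold lam; rw [e_zero]; ring

/-- Gluing cost between the `n`-th and `m`-th circles. -/
def E (n m : ℕ) : ℝ := if n = m then 0 else Real.pi/2 * (e n + e m)

lemma E_nonneg (n m : ℕ) : 0 ≤ E n m := by
  unfold E; split
  · exact le_refl 0
  · have := e_nonneg n; have := e_nonneg m; positivity

lemma E_comm (n m : ℕ) : E n m = E m n := by
  unfold E
  rcases eq_or_ne n m with h | h
  · simp [h]
  · rw [if_neg h, if_neg (Ne.symm h), add_comm]

lemma E_self (n : ℕ) : E n n = 0 := if_pos rfl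

lemma E_ne {n m : ℕ} (h : n ≠ m) : E n m = Real.pi/2 * (e n + e m) := if_neg h

lemma E_le (n m : ℕ) : E n m ≤ Real.pi/2 * (e n + e m) := by
  unfold E; split
  · have := e_nonneg n; have := e_nonneg m; positivity
  · exact le_refl _

/-- The triangle inequality for the glued metric. -/
lemma tri (n m k : ℕ) (x z y : S) :
    E n m + min (lam n) (lam m) * dist x y ≤
      (E n k + min (lam n) (lam k) * dist x z) + (E k m + min (lam k) (lam m) * dist z y) := by
  have hd := dist_triangle x z y
  have hxz : (0:ℝ) ≤ dist x z := dist_nonneg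
  have hzy : (0:ℝ) ≤ dist z y := dist_nonneg
  have hxy : (0:ℝ) ≤ dist x y := dist_nonneg
  rcases eq_or_ne k n with rfl | hkn
  · rw [E_self, min_self]
    have hμ : min (lam k) (lam m) ≤ lam k := min_le_left _ _
    have hμ0 : (0:ℝ) ≤ min (lam k) (lam m) := le_min (lam_pos k).le (lam_pos m).le
    nlinarith [mul_le_mul_of_nonneg_left hd hμ0, mul_le_mul_of_nonneg_right hμ hxz]
  rcases eq_or_ne k m with rfl | hkm
  · rw [E_self, min_self, E_comm n k]
    have hμ : min (lam n) (lam k) ≤ lam k := min_le_right _ _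
    have hμ0 : (0:ℝ) ≤ min (lam n) (lam k) := le_min (lam_pos n).le (lam_pos k).le
    nlinarith [mul_le_mul_of_nonneg_left hd hμ0, mul_le_mul_of_nonneg_right hμ hzy]
  · set μ := min (lam n) (lam m) with hμdef
    set ν := min μ (lam k) with hνdef
    have hν0 : (0:ℝ) ≤ ν := le_min (le_min (lam_pos n).le (lam_pos m).le) (lam_pos k).le
    have hνα : ν ≤ min (lam n) (lam k) :=
      min_le_min (min_le_left _ _) (le_refl _)
    have hνβ : ν ≤ min (lam k) (lam m) :=
      le_min (min_le_right _ _) ((min_le_left _ _).trans (min_le_right _ _))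
    have hμν : μ - ν ≤ e k := by
      rcases le_total μ (lam k) with h | h
      · rw [hνdef, min_eq_left h]; simp [e_nonneg k]
      · rw [hνdef, min_eq_right h]
        have h1 : μ ≤ 1 := le_trans (min_le_left _ _) (lam_le_one n)
        have h2 : lam k = 1 - e k := rfl
        linarith
    have hμν0 : 0 ≤ μ - ν := by
      rw [hνdef]; exact sub_nonneg.2 (min_le_left _ _)
    have hEE : E n m + Real.pi * e k ≤ E n k + E k m := by
      rw [E_ne (fun h => hkn h.symm), E_ne hkm]
      have h1 := E_le n m
      have h2 := Real.pi_pos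
      nlinarith [e_nonneg k]
    have h1 : ν * dist x y ≤
        min (lam n) (lam k) * dist x z + min (lam k) (lam m) * dist z y := by
      calc ν * dist x y ≤ ν * (dist x z + dist z y) := mul_le_mul_of_nonneg_left hd hν0
        _ ≤ _ := by nlinarith [mul_le_mul_of_nonneg_right hνα hxz,
            mul_le_mul_of_nonneg_right hνβ hzy]
    have h2 : (μ - ν) * dist x y ≤ e k * Real.pi :=
      mul_le_mul hμν (dist_le_pi x y) hxy (e_nonneg k)
    nlinarith [h1, h2, hEE]

/-- The space obtained by gluing, for each `n ≥ 1`, a circle shrunk by factor `1 - e n`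
at cost `π e n / 2` onto the base circle (index `0`). -/
structure Yt where
  c : S
  n : ℕ

instance : MetricSpace Yt where
  dist a b := E a.n b.n + min (lam a.n) (lam b.n) * dist a.c b.c
  dist_self a := by simp [E_self, min_self, dist_self]
  dist_comm a b := by
    simp only [E_comm a.n b.n, min_comm (lam a.n) (lam b.n), dist_comm a.c b.c]
  dist_triangle a b c := tri a.n c.n b.n a.c b.c c.c
  eq_of_dist_eq_zero := by
    intro a b h
    have h' : E a.n b.n + min (lam a.n) (lam b.n) * dist a.c b.c = 0 := h
    have h1 : 0 ≤ E a.n b.n := E_nonneg _ _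
    have hm : 0 < min (lam a.n) (lam b.n) := lt_min (lam_pos _) (lam_pos _)
    have h2 : 0 ≤ min (lam a.n) (lam b.n) * dist a.c b.c := mul_nonneg hm.le dist_nonneg
    have hE0 : E a.n b.n = 0 := by linarith [h']
    have hnm : a.n = b.n := by
      by_contra hne
      rw [E_ne hne] at hE0
      have hpos : 0 < e a.n + e b.n := by
        rcases Nat.eq_zero_or_pos a.n with h0 | h0
        · have : b.n ≠ 0 := fun hb => hne (h0.trans hb.symm)
          have := e_pos this
          have := e_nonneg a.n
          linarith
        · have := e_pos (Nat.pos_iff_ne_zero.1 h0)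
          have := e_nonneg b.n
          linarith
      have := Real.pi_pos
      nlinarith
    have hd0 : dist a.c b.c = 0 := by
      have : min (lam a.n) (lam b.n) * dist a.c b.c = 0 := by linarith [h']
      rcases mul_eq_zero.1 this with h' | h'
      · exact absurd h' hm.ne'
      · exact h'
    obtain ⟨ac, an⟩ := a
    obtain ⟨bc, bn⟩ := b
    simp only at hnm hd0
    rw [hnm, eq_of_dist_eq_zero hd0]

lemma Ydist (a b : Yt) :
    dist a b = E a.n b.n + min (lam a.n) (lam b.n) * dist a.c b.c := rfl

/-- The isometric embedding of the circle as the base copy in `Yt`. -/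
def emb : S → Yt := fun x => ⟨x, 0⟩

lemma emb_isom : Isometry emb := by
  apply Isometry.of_dist_eq
  intro x y
  rw [Ydist]
  simp [emb, E_self, lam_zero]

end CNR

/-- The circle `S¹ = ℝ/2πℤ` of circumference `2π` with the quotient (inner) metric is not an
absolute 1-Lipschitz neighborhood retract: there are a metric space `Y` and an isometric
embedding `i : S¹` into `Y` such that no open neighborhood of `i(S¹)` in `Y` admits a 1-Lipschitz
retraction onto `i(S¹)`. -/
theorem addCircle_not_abs1LipNbhdRetract :
    ¬ IsAbs1LipNbhdRetract (AddCircle (2 * Real.pi)) := by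
  intro h
  open CNR in
  obtain ⟨U, hUopen, hsub, ρ, hρ, himg, hfix⟩ := h CNR.Yt CNR.emb CNR.emb_isom
  have hK : IsCompact (Set.range CNR.emb) := isCompact_range CNR.emb_isom.continuous
  obtain ⟨δ, hδ, hthick⟩ := hK.exists_thickening_subset_open hUopen hsub
  obtain ⟨N, hN⟩ := exists_nat_gt (Real.pi / δ)
  set n := N + 1 with hn
  have hne : n ≠ 0 := Nat.succ_ne_zero N
  have hπ := Real.pi_pos
  have heδ : Real.pi/2 * CNR.e n < δ := by
    rw [hn, CNR.e_succ]
    rw [div_lt_iff₀ hδ] at hN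
    have hN2 : Real.pi < δ * ((N:ℝ)+2) := by nlinarith [(Nat.cast_nonneg N : (0:ℝ) ≤ N)]
    rw [mul_one_div, div_lt_iff₀ (by positivity)]
    linarith
  have hdistn : ∀ x : CNR.S, dist (CNR.Yt.mk x n) (CNR.emb x) = Real.pi/2 * CNR.e n := by
    intro x
    rw [CNR.Ydist]
    simp [CNR.emb, CNR.E_ne hne, CNR.e_zero, dist_self]
  have memU : ∀ x : CNR.S, (CNR.Yt.mk x n) ∈ U := by
    intro x
    apply hthick
    rw [mem_thickening_iff]
    exact ⟨CNR.emb x, mem_range_self x, by rw [hdistn x]; exact heδ⟩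
  set u : CNR.S → U := fun x => ⟨CNR.Yt.mk x n, memU x⟩ with hu
  have gdef : ∀ x : CNR.S, ∃ w, CNR.emb w = ρ (u x) := fun x => himg (u x)
  set g : CNR.S → CNR.S := fun x => (gdef x).choose with hgdef
  have hgi : ∀ x, CNR.emb (g x) = ρ (u x) := fun x => (gdef x).choose_spec
  have hg : ∀ x y : CNR.S, dist (g x) (g y) ≤ CNR.lam n * dist x y := by
    intro x y
    rw [← CNR.emb_isom.dist_eq (g x) (g y), hgi, hgi]
    have h1 := hρ.dist_le_mul (u x) (u y)
    have h2 : dist (u x) (u y) = CNR.lam n * dist x y := by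
      rw [hu]
      rw [Subtype.dist_eq]
      rw [CNR.Ydist]
      simp [CNR.E_self, min_self]
    rw [h2] at h1
    simpa using h1
  have hc : ∀ x : CNR.S, dist (g x) x ≤ Real.pi/2 * CNR.e n := by
    intro x
    have hx : CNR.emb x ∈ U := hsub (mem_range_self x)
    have hfx : ρ ⟨CNR.emb x, hx⟩ = CNR.emb x := hfix x hx
    calc dist (g x) x = dist (CNR.emb (g x)) (CNR.emb x) := (CNR.emb_isom.dist_eq _ _).symm
      _ = dist (ρ (u x)) (ρ ⟨CNR.emb x, hx⟩) := by rw [hgi, hfx]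
      _ ≤ 1 * dist (u x) (⟨CNR.emb x, hx⟩ : U) := hρ.dist_le_mul _ _
      _ = dist (CNR.Yt.mk x n) (CNR.emb x) := by rw [one_mul, Subtype.dist_eq]
      _ = Real.pi/2 * CNR.e n := hdistn x
  exact CNR.no_contraction g (CNR.lam n) (Real.pi/2 * CNR.e n)
    (by unfold CNR.lam; linarith [CNR.e_pos hne])
    (by nlinarith [CNR.e_le_half n, CNR.e_nonneg n])
    hg hc
end
end

section
/- Let X be an absolute 1-Lipschitz uniform neighborhood retract. Then X is complete and geodesic: X is a complete metric space, and for all x, y ∈ X there exists a geodesic from x to y. -/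
open Set Metric

universe u

/-!
Embed `X` isometrically in the Banach space `X →ᵇ ℝ` and let `r` be the retraction, 1-Lipschitz
on the `ε`-neighbourhood of `X`. A Cauchy sequence of `X` converges in `X →ᵇ ℝ` to a point of
this neighbourhood, and `r` maps the limit to a limit in `X`. For `t < ε`, `r` maps the initial
piece of length `t` of the segment from `x` to `y` to a 1-Lipschitz path from `x` to a point `q`
with `d(q, y) ≤ d(x, y) - t`. Concatenating such pieces gives a 1-Lipschitz path of length
`d(x, y)` from `x` to `y`, and any such path is a geodesic.
-/

open Function
open scoped BoundedContinuousFunction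

theorem LipschitzOnWith.dist_le_dist {α β : Type*} [PseudoMetricSpace α] [PseudoMetricSpace β]
    {f : α → β} {s : Set α} (hf : LipschitzOnWith 1 f s) {a b : α} (ha : a ∈ s) (hb : b ∈ s) :
    dist (f a) (f b) ≤ dist a b := by
  simpa using hf.dist_le_mul a ha b hb

section

variable {X : Type u} [MetricSpace X]

/-- Unlike `kuratowskiEmbedding`, this needs no separability and stays in the universe of `X`. -/
noncomputable def kuratowskiBCF (x₀ x : X) : X →ᵇ ℝ :=
  .ofNormedAddCommGroup (fun z => dist x z - dist x₀ z) (by fun_prop) (dist x x₀)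
    fun z => abs_dist_sub_le x x₀ z

theorem isometry_kuratowskiBCF (x₀ : X) : Isometry (kuratowskiBCF x₀) := by
  refine Isometry.of_dist_eq fun x y => le_antisymm ?_ ?_
  · refine (BoundedContinuousFunction.dist_le dist_nonneg).2 fun z => ?_
    simpa [kuratowskiBCF, Real.dist_eq] using abs_dist_sub_le x y z
  · simpa [kuratowskiBCF, Real.dist_eq] using
      (kuratowskiBCF x₀ x).dist_coe_le_dist (g := kuratowskiBCF x₀ y) y

def LipschitzJoined (L : ℝ) (x y : X) : Prop :=
  ∃ γ : ℝ → X, γ 0 = x ∧ γ L = y ∧ LipschitzOnWith 1 γ (Icc 0 L)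

namespace LipschitzJoined

variable {L L' : ℝ} {x y z : X}

theorem refl (x : X) : LipschitzJoined 0 x x :=
  ⟨fun _ => x, rfl, rfl, LipschitzOnWith.mk_one fun _ _ _ _ => by simp⟩

theorem dist_le (h : LipschitzJoined L x y) (hL : 0 ≤ L) : dist x y ≤ L := by
  obtain ⟨γ, rfl, rfl, hγ⟩ := h
  simpa [abs_of_nonneg hL] using hγ.dist_le_dist (left_mem_Icc.2 hL) (right_mem_Icc.2 hL)

theorem trans (hxy : LipschitzJoined L x y) (hyz : LipschitzJoined L' y z) (hL : 0 ≤ L)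
    (hL' : 0 ≤ L') : LipschitzJoined (L + L') x z := by
  obtain ⟨γ, rfl, rfl, hγ⟩ := hxy
  obtain ⟨γ', hγ'0, rfl, hγ'⟩ := hyz
  set c : ℝ → X := fun t => if t ≤ L then γ t else γ' (t - L)
  have hle : ∀ s ∈ Icc 0 (L + L'), ∀ t ∈ Icc 0 (L + L'), s ≤ t →
      dist (c s) (c t) ≤ dist s t := by
    intro s ⟨hs0, hs1⟩ t ⟨ht0, ht1⟩ hst
    rcases le_or_gt t L with htL | hLt
    · simpa [c, hst.trans htL, htL] using hγ.dist_le_dist ⟨hs0, hst.trans htL⟩ ⟨ht0, htL⟩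
    rcases le_or_gt s L with hsL | hLs
    · have h₁ := hγ.dist_le_dist ⟨hs0, hsL⟩ (right_mem_Icc.2 hL)
      have h₂ := hγ'.dist_le_dist (left_mem_Icc.2 hL')
        (⟨by linarith, by linarith⟩ : t - L ∈ Icc 0 L')
      rw [hγ'0] at h₂
      simp only [c, hsL, hLt.not_ge, if_true, if_false, Real.dist_eq] at h₁ h₂ ⊢
      calc dist (γ s) (γ' (t - L)) ≤ dist (γ s) (γ L) + dist (γ L) (γ' (t - L)) :=
            dist_triangle _ _ _
        _ ≤ |s - L| + |0 - (t - L)| := add_le_add h₁ h₂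
        _ = |s - t| := by
            rw [abs_of_nonpos (by linarith), abs_of_nonpos (by linarith),
              abs_of_nonpos (by linarith)]
            ring
    · simpa [c, hLs.not_ge, hLt.not_ge, Real.dist_eq] using
        hγ'.dist_le_dist (⟨by linarith, by linarith⟩ : s - L ∈ Icc 0 L')
          (⟨by linarith, by linarith⟩ : t - L ∈ Icc 0 L')
  refine ⟨c, by simp [c, hL], ?_, LipschitzOnWith.mk_one fun s hs t ht => ?_⟩
  · rcases hL'.eq_or_lt with rfl | hpos
    · simp [c, hγ'0]
    · simp [c, hpos]
  · rcases le_total s t with hst | hts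
    · exact hle s hs t ht hst
    · rw [dist_comm, dist_comm s]
      exact hle t ht s hs hts

theorem exists_isGeodesicSegment (h : LipschitzJoined (dist x y) x y) :
    ∃ c : ℝ → X, c 0 = x ∧ c 1 = y ∧ IsGeodesicSegment c := by
  obtain ⟨γ, hγ0, hγ1, hγ⟩ := h
  set d := dist x y
  have upper : ∀ s ∈ Icc (0:ℝ) 1, ∀ t ∈ Icc (0:ℝ) 1,
      dist (γ (s * d)) (γ (t * d)) ≤ |s - t| * d := by
    intro s ⟨hs0, hs1⟩ t ⟨ht0, ht1⟩
    have hd : 0 ≤ d := dist_nonneg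
    calc dist (γ (s * d)) (γ (t * d)) ≤ dist (s * d) (t * d) :=
          hγ.dist_le_dist ⟨by positivity, mul_le_of_le_one_left hd hs1⟩
            ⟨by positivity, mul_le_of_le_one_left hd ht1⟩
      _ = |s - t| * d := by rw [Real.dist_eq, ← sub_mul, abs_mul, abs_of_nonneg hd]
  refine ⟨fun s => γ (s * d), by simpa using hγ0, by simpa using hγ1, ?_⟩
  intro s hs t ht
  wlog hst : s ≤ t generalizing s t
  · rw [dist_comm, abs_sub_comm]
    exact this t ht s hs (le_of_not_ge hst)
  simp only [zero_mul, one_mul, hγ0, hγ1]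
  refine le_antisymm (upper s hs t ht) ?_
  have h₀ := upper 0 (left_mem_Icc.2 zero_le_one) s hs
  have h₁ := upper t ht 1 (right_mem_Icc.2 zero_le_one)
  simp only [zero_mul, one_mul, hγ0, hγ1, zero_sub, abs_neg, abs_of_nonneg hs.1,
    abs_of_nonpos (sub_nonpos.2 ht.2)] at h₀ h₁
  rw [abs_of_nonpos (sub_nonpos.2 hst)]
  have := dist_triangle4 x (γ (s * d)) (γ (t * d)) y
  linarith

end LipschitzJoined

theorem lipschitzJoined_dist_of_forall_step {ε : ℝ} (hε : 0 < ε)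
    (step : ∀ x y : X, ∀ t, 0 ≤ t → t ≤ dist x y → t < ε →
      ∃ q, LipschitzJoined t x q ∧ dist q y ≤ dist x y - t)
    (x y : X) : LipschitzJoined (dist x y) x y := by
  obtain ⟨δ, hδ0, hδε⟩ : ∃ δ, 0 < δ ∧ δ < ε := ⟨ε / 2, by positivity, by linarith⟩
  suffices ∀ n : ℕ, ∀ x y : X, dist x y ≤ n * δ → LipschitzJoined (dist x y) x y by
    obtain ⟨n, hn⟩ := exists_nat_ge (dist x y / δ)
    exact this n x y ((div_le_iff₀ hδ0).1 hn)
  intro n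
  induction n with
  | zero =>
    intro x y hxy
    obtain rfl : x = y := dist_le_zero.1 (by simpa using hxy)
    simpa using LipschitzJoined.refl x
  | succ n ih =>
    intro x y hxy
    set t := min δ (dist x y)
    have ht0 : 0 ≤ t := le_min hδ0.le dist_nonneg
    obtain ⟨q, hxq, hqy⟩ := step x y t ht0 (min_le_right _ _)
      ((min_le_left _ _).trans_lt hδε)
    have hqy' : dist q y = dist x y - t :=
      le_antisymm hqy (by linarith [hxq.dist_le ht0, dist_triangle x q y])
    have hqn : dist q y ≤ n * δ := by
      rw [hqy']
      push_cast at hxy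
      have : 0 ≤ (n : ℝ) * δ := by positivity
      obtain h | h : t = δ ∨ t = dist x y := min_choice _ _ <;> rw [h] <;> linarith
    simpa [hqy'] using hxq.trans (ih q y hqn) ht0 dist_nonneg

theorem IsAbs1LipUnifNbhdRetract.exists_retraction [Nonempty X] (h : IsAbs1LipUnifNbhdRetract X)
    {Y : Type u} [MetricSpace Y] {K : X → Y} (hK : Isometry K) :
    ∃ ε > 0, ∃ r : Y → X, LeftInverse r K ∧
      LipschitzOnWith 1 r {p | infDist p (range K) < ε} := by
  obtain ⟨ε, hε, ρ, hρ, hρK, hρK'⟩ := h Y K hK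
  classical
  let ρ' : Y → Y := fun p => if hp : infDist p (range K) < ε then ρ ⟨p, hp⟩ else p
  have hKρ' : ∀ p (hp : infDist p (range K) < ε), K (invFun K (ρ' p)) = ρ ⟨p, hp⟩ := by
    intro p hp
    simpa only [ρ', dif_pos hp] using invFun_eq (hρK ⟨p, hp⟩)
  refine ⟨ε, hε, invFun K ∘ ρ', fun x => ?_, LipschitzOnWith.mk_one fun p hp p' hp' => ?_⟩
  · have hx : infDist (K x) (range K) < ε := by rwa [infDist_zero_of_mem (mem_range_self x)]
    simp [ρ', hx, hρK' x hx, leftInverse_invFun hK.injective x]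
  · rw [comp_apply, comp_apply, ← hK.dist_eq, hKρ' p hp, hKρ' p' hp']
    simpa [Subtype.dist_eq] using hρ.dist_le_mul ⟨p, hp⟩ ⟨p', hp'⟩

theorem completeSpace_of_leftInverse {Y : Type*} [MetricSpace Y] [CompleteSpace Y] {K : X → Y}
    {r : Y → X} {ε : ℝ} (hK : Isometry K) (hr : LeftInverse r K) (hε : 0 < ε)
    (hcont : ContinuousOn r {p | infDist p (range K) < ε}) : CompleteSpace X := by
  refine Metric.complete_of_cauchySeq_tendsto fun u hu => ?_
  obtain ⟨p, hp⟩ := cauchySeq_tendsto_of_complete (hK.uniformContinuous.comp_cauchySeq hu)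
  have hpU : infDist p (range K) < ε := by
    rwa [infDist_zero_of_mem_closure (mem_closure_of_tendsto hp
      (Filter.Eventually.of_forall fun n => mem_range_self (f := K) (u n)))]
  have hr_p : ContinuousAt r p :=
    hcont.continuousAt ((isOpen_lt (continuous_infDist_pt _) continuous_const).mem_nhds hpU)
  exact ⟨r p, by simpa [comp_def, hr _] using hr_p.tendsto.comp hp⟩

theorem exists_lipschitzJoined_of_retraction {E : Type*} [NormedAddCommGroup E]
    [NormedSpace ℝ E] {K : X → E} {r : E → X} {ε : ℝ} (hK : Isometry K) (hr : LeftInverse r K)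
    (hlip : LipschitzOnWith 1 r {p | infDist p (range K) < ε}) (x y : X) (t : ℝ) (ht0 : 0 ≤ t)
    (htd : t ≤ dist x y) (htε : t < ε) :
    ∃ q, LipschitzJoined t x q ∧ dist q y ≤ dist x y - t := by
  rcases (dist_nonneg : 0 ≤ dist x y).eq_or_lt with hd | hd
  · obtain rfl : t = 0 := le_antisymm (hd ▸ htd) ht0
    exact ⟨x, .refl x, by simp⟩
  set σ : ℝ → E := fun s => AffineMap.lineMap (K x) (K y) (s / dist x y)
  have hσ : ∀ s s', dist (σ s) (σ s') = dist s s' := by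
    intro s s'
    rw [dist_lineMap_lineMap, hK.dist_eq, Real.dist_eq, Real.dist_eq, ← sub_div, abs_div,
      abs_of_pos hd, div_mul_cancel₀ _ hd.ne']
  have hσ0 : σ 0 = K x := by simp [σ]
  have hσU : ∀ s ∈ Icc 0 t, infDist (σ s) (range K) < ε := fun s hs =>
    calc infDist (σ s) (range K) ≤ dist (σ s) (σ 0) :=
          hσ0 ▸ infDist_le_dist_of_mem (mem_range_self x)
      _ ≤ t := by rw [hσ, Real.dist_eq, sub_zero, abs_of_nonneg hs.1]; exact hs.2
      _ < ε := htε
  have hyU : infDist (K y) (range K) < ε := by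
    rw [infDist_zero_of_mem (mem_range_self y)]; linarith
  refine ⟨r (σ t), ⟨r ∘ σ, by simp [hσ0, hr x], rfl, ?_⟩, ?_⟩
  · exact LipschitzOnWith.mk_one fun s hs s' hs' =>
      (hlip.dist_le_dist (hσU s hs) (hσU s' hs')).trans_eq (hσ s s')
  · calc dist (r (σ t)) y = dist (r (σ t)) (r (K y)) := by rw [hr y]
      _ ≤ dist (σ t) (K y) := hlip.dist_le_dist (hσU t ⟨ht0, le_rfl⟩) hyU
      _ = dist x y - t := by
        simp only [σ, dist_lineMap_right, hK.dist_eq, Real.norm_eq_abs]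
        rw [abs_of_nonneg (by rw [sub_nonneg, div_le_one hd]; exact htd)]
        field_simp

end

/-- An absolute 1-Lipschitz uniform neighborhood retract is a complete, geodesic metric
space. -/
theorem complete_geodesic_of_abs1LipUnifNbhdRetract
    {X : Type u} [MetricSpace X] (h : IsAbs1LipUnifNbhdRetract X) :
    CompleteSpace X ∧
    ∀ x y : X, ∃ c : ℝ → X, c 0 = x ∧ c 1 = y ∧ IsGeodesicSegment c := by
  rcases isEmpty_or_nonempty X with hX | hX
  · exact ⟨inferInstance, fun x => isEmptyElim x⟩
  have hK := isometry_kuratowskiBCF hX.some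
  obtain ⟨ε, hε, r, hr, hlip⟩ := h.exists_retraction hK
  refine ⟨completeSpace_of_leftInverse hK hr hε hlip.continuousOn, fun x y => ?_⟩
  have step := exists_lipschitzJoined_of_retraction hK hr hlip
  exact (lipschitzJoined_dist_of_forall_step hε step x y).exists_isGeodesicSegment
end

section
/- Let X be an absolute 1-Lipschitz uniform neighborhood retract. Then X is simply connected. -/
open Set Metric CategoryTheory

universe u

section Aux

attribute [local instance] Path.Homotopic.setoid

variable {X : Type u} [MetricSpace X] {E : Type u} [NormedAddCommGroup E] [NormedSpace ℝ E]
variable {i : X → E} {ε : ℝ}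

private lemma seg_left (a b : E) {c : ℝ} (h0 : 0 ≤ c) :
    dist ((1 - c) • a + c • b) a = c * dist a b := by
  have h : (1 - c) • a + c • b - a = c • (b - a) := by module
  rw [dist_eq_norm, h, norm_smul, Real.norm_eq_abs, abs_of_nonneg h0, dist_eq_norm, norm_sub_rev]

private lemma seg_right (a b : E) {c : ℝ} (h1 : c ≤ 1) :
    dist ((1 - c) • a + c • b) b = (1 - c) * dist a b := by
  have h : (1 - c) • a + c • b - b = (1 - c) • (a - b) := by module
  rw [dist_eq_norm, h, norm_smul, Real.norm_eq_abs, abs_of_nonneg (by linarith), dist_eq_norm]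

variable {φ : {y : E // infDist y (Set.range i) < ε} → X}

private lemma phi_congr (hφf : ∀ (x : X) (hh : infDist (i x) (Set.range i) < ε), φ ⟨i x, hh⟩ = x)
    {y : E} {x : X} (hxy : y = i x) {hy : infDist y (Set.range i) < ε} :
    φ ⟨y, hy⟩ = x := by subst hxy; exact hφf x hy

private lemma mem_of_close (x : X) {y : E} (hd : dist y (i x) < ε) :
    infDist y (Set.range i) < ε :=
  lt_of_le_of_lt (infDist_le_dist_of_mem (Set.mem_range_self x)) hd

private lemma self_mem (hε : 0 < ε) (x : X) : infDist (i x) (Set.range i) < ε :=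
  mem_of_close x (by simpa using hε)

variable (hi : Isometry i) (hε : 0 < ε)
  (hφ : ∀ u v : {y : E // infDist y (Set.range i) < ε}, dist (φ u) (φ v) ≤ dist (u : E) (v : E))
  (hφc : Continuous φ)
  (hφf : ∀ (x : X) (hh : infDist (i x) (Set.range i) < ε), φ ⟨i x, hh⟩ = x)

include hi hε hφ hφc hφf

private lemma loop_step (b : X) (γ : Path b b) {c : ℝ} (hc0 : 0 ≤ c) (hc1 : c ≤ 1)
    (hsm : ∀ t : unitInterval, c * dist (γ t) b < ε) :
    ∃ γ' : Path b b, γ.Homotopic γ' ∧ ∀ t, dist (γ' t) b ≤ (1 - c) * dist (γ t) b := by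
  have hmem : ∀ s t : unitInterval,
      infDist ((1 - (s : ℝ) * c) • i (γ t) + ((s : ℝ) * c) • i b) (Set.range i) < ε := by
    intro s t
    apply mem_of_close (γ t)
    rw [seg_left _ _ (mul_nonneg s.2.1 hc0), hi.dist_eq]
    have hd0 : (0:ℝ) ≤ c * dist (γ t) b := mul_nonneg hc0 dist_nonneg
    have h1 : (s:ℝ) * (c * dist (γ t) b) ≤ 1 * (c * dist (γ t) b) :=
      mul_le_mul_of_nonneg_right s.2.2 hd0
    have h2 := hsm t
    rw [mul_assoc]
    linarith
  let F : unitInterval × unitInterval → X :=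
    fun q => φ ⟨(1 - (q.1 : ℝ) * c) • i (γ q.2) + ((q.1 : ℝ) * c) • i b, hmem q.1 q.2⟩
  have hsc : Continuous fun q : unitInterval × unitInterval => ((q.1 : ℝ) * c) :=
    (continuous_subtype_val.comp continuous_fst).mul continuous_const
  have Fcont : Continuous F := by
    apply hφc.comp
    apply Continuous.subtype_mk
    exact ((continuous_const.sub hsc).smul
      ((hi.continuous.comp γ.continuous).comp continuous_snd)).add (hsc.smul continuous_const)
  have hF0 : ∀ s : unitInterval, F (s, 0) = b := by
    intro s
    exact phi_congr hφf (by rw [γ.source]; module)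
  have hF1 : ∀ s : unitInterval, F (s, 1) = b := by
    intro s
    exact phi_congr hφf (by rw [γ.target]; module)
  let γ' : Path b b :=
    { toFun := fun t => F (1, t)
      continuous_toFun := Fcont.comp (continuous_const.prodMk continuous_id)
      source' := hF0 1
      target' := hF1 1 }
  refine ⟨γ', ⟨{ toFun := F
                 continuous_toFun := Fcont
                 map_zero_left := ?_
                 map_one_left := fun t => rfl
                 prop' := ?_ }⟩, ?_⟩
  · intro t
    show F (0, t) = γ t
    exact phi_congr hφf (by norm_num)
  · intro s t ht
    rcases ht with h0 | h1
    · subst h0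
      show F (s, 0) = γ 0
      rw [hF0 s, γ.source]
    · rw [Set.mem_singleton_iff] at h1
      subst h1
      show F (s, 1) = γ 1
      rw [hF1 s, γ.target]
  · intro t
    have hb : infDist (i b) (Set.range i) < ε := self_mem hε b
    have h2 := hφ ⟨_, hmem 1 t⟩ ⟨i b, hb⟩
    rw [hφf b hb] at h2
    have h3 : dist (γ' t) b = dist (φ ⟨_, hmem 1 t⟩) b := rfl
    rw [h3]
    refine le_trans h2 ?_
    show dist ((1 - ((1:unitInterval) : ℝ) * c) • i (γ t) + (((1:unitInterval) : ℝ) * c) • i b)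
      (i b) ≤ _
    rw [Set.Icc.coe_one, one_mul, seg_right _ _ hc1, hi.dist_eq]

private lemma join_step (x x' : X) {c : ℝ} (hc0 : 0 ≤ c) (hc1 : c ≤ 1)
    (hsm : c * dist x x' < ε) :
    ∃ x₁ : X, Joined x x₁ ∧ dist x₁ x' ≤ (1 - c) * dist x x' := by
  have hmem : ∀ t : unitInterval,
      infDist ((1 - (t : ℝ) * c) • i x + ((t : ℝ) * c) • i x') (Set.range i) < ε := by
    intro t
    apply mem_of_close x
    rw [seg_left _ _ (mul_nonneg t.2.1 hc0), hi.dist_eq]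
    have hd0 : (0:ℝ) ≤ c * dist x x' := mul_nonneg hc0 dist_nonneg
    have h1 : (t:ℝ) * (c * dist x x') ≤ 1 * (c * dist x x') :=
      mul_le_mul_of_nonneg_right t.2.2 hd0
    rw [mul_assoc]
    linarith
  let F : unitInterval → X :=
    fun t => φ ⟨(1 - (t : ℝ) * c) • i x + ((t : ℝ) * c) • i x', hmem t⟩
  have hsc : Continuous fun t : unitInterval => ((t : ℝ) * c) :=
    continuous_subtype_val.mul continuous_const
  have Fcont : Continuous F := by
    apply hφc.comp
    apply Continuous.subtype_mk
    exact ((continuous_const.sub hsc).smul continuous_const).add (hsc.smul continuous_const)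
  refine ⟨F 1, ⟨{ toFun := F
                  continuous_toFun := Fcont
                  source' := ?_
                  target' := rfl }⟩, ?_⟩
  · exact phi_congr hφf (by norm_num)
  · have hb : infDist (i x') (Set.range i) < ε := self_mem hε x'
    have h2 := hφ ⟨_, hmem 1⟩ ⟨i x', hb⟩
    rw [hφf x' hb] at h2
    refine le_trans h2 ?_
    show dist ((1 - ((1:unitInterval) : ℝ) * c) • i x + (((1:unitInterval) : ℝ) * c) • i x')
      (i x') ≤ _
    rw [Set.Icc.coe_one, one_mul, seg_right _ _ hc1, hi.dist_eq]

private lemma joined_all : ∀ n : ℕ, ∀ x x' : X, dist x x' ≤ n * (ε / 2) → Joined x x' := by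
  intro n
  induction n with
  | zero =>
    intro x x' hd
    have hxx : x = x' := dist_le_zero.mp (by simpa using hd)
    rw [hxx]
  | succ n IH =>
    intro x x' hd
    push_cast at hd
    have hn1 : (0:ℝ) < (n:ℝ) + 1 := by positivity
    set c : ℝ := 1 / ((n:ℝ) + 1) with hc
    have hc0 : 0 ≤ c := by positivity
    have hc1 : c ≤ 1 := by rw [hc, div_le_one hn1]; linarith
    have hceq : c * (((n:ℝ) + 1) * (ε / 2)) = ε / 2 := by rw [hc]; field_simp
    have hsm : c * dist x x' < ε := by
      have h1 : c * dist x x' ≤ c * (((n:ℝ) + 1) * (ε / 2)) :=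
        mul_le_mul_of_nonneg_left hd hc0
      rw [hceq] at h1
      linarith
    obtain ⟨x₁, hj, hb⟩ := join_step hi hε hφ hφc hφf x x' hc0 hc1 hsm
    refine hj.trans (IH x₁ x' ?_)
    have h3 : (1 - c) * dist x x' ≤ (1 - c) * (((n:ℝ) + 1) * (ε / 2)) :=
      mul_le_mul_of_nonneg_left hd (by linarith)
    have h4 : (1 - c) * (((n:ℝ) + 1) * (ε / 2)) = n * (ε / 2) := by
      have he : (1 - c) * (((n:ℝ) + 1) * (ε / 2))
          = ((n:ℝ) + 1) * (ε / 2) - c * (((n:ℝ) + 1) * (ε / 2)) := by ring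
      rw [he, hceq]
      ring
    linarith

private lemma null_all : ∀ n : ℕ, ∀ (b : X) (γ : Path b b),
    (∀ t, dist (γ t) b ≤ n * (ε / 2)) → γ.Homotopic (Path.refl b) := by
  intro n
  induction n with
  | zero =>
    intro b γ hb
    have hγ : γ = Path.refl b := by
      apply Path.ext
      funext t
      have := dist_le_zero.mp (by simpa using hb t)
      simpa using this
    rw [hγ]
  | succ n IH =>
    intro b γ hb
    have hb' : ∀ t, dist (γ t) b ≤ ((n:ℝ) + 1) * (ε / 2) := by
      intro t; have := hb t; push_cast at this; linarith
    have hn1 : (0:ℝ) < (n:ℝ) + 1 := by positivity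
    set c : ℝ := 1 / ((n:ℝ) + 1) with hc
    have hc0 : 0 ≤ c := by positivity
    have hc1 : c ≤ 1 := by rw [hc, div_le_one hn1]; linarith
    have hceq : c * (((n:ℝ) + 1) * (ε / 2)) = ε / 2 := by rw [hc]; field_simp
    have hsm : ∀ t, c * dist (γ t) b < ε := by
      intro t
      have h1 : c * dist (γ t) b ≤ c * (((n:ℝ) + 1) * (ε / 2)) :=
        mul_le_mul_of_nonneg_left (hb' t) hc0
      rw [hceq] at h1
      linarith
    obtain ⟨γ', hhom, hbb⟩ := loop_step hi hε hφ hφc hφf b γ hc0 hc1 hsm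
    refine hhom.trans (IH b γ' fun t => ?_)
    have h3 : (1 - c) * dist (γ t) b ≤ (1 - c) * (((n:ℝ) + 1) * (ε / 2)) :=
      mul_le_mul_of_nonneg_left (hb' t) (by linarith)
    have h4 : (1 - c) * (((n:ℝ) + 1) * (ε / 2)) = n * (ε / 2) := by
      have he : (1 - c) * (((n:ℝ) + 1) * (ε / 2))
          = ((n:ℝ) + 1) * (ε / 2) - c * (((n:ℝ) + 1) * (ε / 2)) := by ring
      rw [he, hceq]
      ring
    have h5 := hbb t
    linarith

end Aux

attribute [local instance] Path.Homotopic.setoid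

/-- An absolute 1-Lipschitz uniform neighborhood retract is simply connected. -/
theorem simplyConnected_of_abs1LipUnifNbhdRetract
    {X : Type u} [MetricSpace X] (h : IsAbs1LipUnifNbhdRetract X) :
    SimplyConnectedSpace X := by
  -- `X` is nonempty
  have hne : Nonempty X := by
    by_contra hne
    rw [not_nonempty_iff] at hne
    obtain ⟨ε, hε, ρ, -, hmem, -⟩ :=
      h (ULift.{u} ℝ) (fun x => (hne.false x).elim) (fun x => (hne.false x).elim)
    have h0 : infDist (ULift.up (0:ℝ))
        (Set.range fun x : X => ((hne.false x).elim : ULift.{u} ℝ)) < ε := by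
      rw [Set.range_eq_empty]
      simpa [infDist_empty] using hε
    obtain ⟨x, -⟩ := hmem ⟨_, h0⟩
    exact hne.false x
  obtain ⟨x₀⟩ := hne
  -- the isometric embedding into bounded continuous functions
  let i : X → (BoundedContinuousFunction X ℝ) := fun x =>
    BoundedContinuousFunction.mkOfBound
      ⟨fun y => dist x y - dist x₀ y, by fun_prop⟩ (2 * dist x x₀)
      (fun y y' => by
        have h1 := abs_le.mp (abs_dist_sub_le x x₀ y)
        have h2 := abs_le.mp (abs_dist_sub_le x x₀ y')
        rw [Real.dist_eq]
        simp only [ContinuousMap.coe_mk]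
        apply abs_le.mpr
        refine ⟨by linarith [h1.1, h2.2], by linarith [h1.2, h2.1]⟩)
  have ixy : ∀ x y : X, i x y = dist x y - dist x₀ y := fun _ _ => rfl
  have hi : Isometry i := by
    apply Isometry.of_dist_eq
    intro x x'
    apply le_antisymm
    · refine (BoundedContinuousFunction.dist_le dist_nonneg).mpr fun y => ?_
      have h1 := abs_dist_sub_le x x' y
      rw [Real.dist_eq, ixy, ixy]
      have e : dist x y - dist x₀ y - (dist x' y - dist x₀ y) = dist x y - dist x' y := by ring
      rw [e]
      exact h1
    · have hbd := BoundedContinuousFunction.dist_coe_le_dist (f := i x) (g := i x') x'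
      rw [Real.dist_eq, ixy, ixy] at hbd
      have e : dist x x' - dist x₀ x' - (dist x' x' - dist x₀ x') = dist x x' := by
        simp [dist_self]
      rw [e, abs_of_nonneg dist_nonneg] at hbd
      exact hbd
  obtain ⟨ε, hε, ρ, hρlip, hρmem, hρfix⟩ := h (BoundedContinuousFunction X ℝ) i hi
  -- the retraction with values in `X`
  let φ : {y : BoundedContinuousFunction X ℝ // infDist y (Set.range i) < ε} → X := fun u => (hρmem u).choose
  have hφi : ∀ u, i (φ u) = ρ u := fun u => (hρmem u).choose_spec
  have hφ : ∀ u v : {y : BoundedContinuousFunction X ℝ // infDist y (Set.range i) < ε},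
      dist (φ u) (φ v) ≤ dist (u : BoundedContinuousFunction X ℝ) (v : BoundedContinuousFunction X ℝ) := by
    intro u v
    rw [← hi.dist_eq, hφi, hφi]
    simpa [Subtype.dist_eq] using hρlip.dist_le_mul u v
  have hφf : ∀ (x : X) (hh : infDist (i x) (Set.range i) < ε), φ ⟨i x, hh⟩ = x := by
    intro x hh
    apply hi.injective
    rw [hφi]
    exact hρfix x hh
  have hφc : Continuous φ := by
    refine (LipschitzWith.of_dist_le_mul (K := 1) fun u v => ?_).continuous
    simpa [Subtype.dist_eq] using hφ u v
  -- path connectedness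
  have hjoin : ∀ a b : X, Joined a b := by
    intro a b
    obtain ⟨n, hn⟩ := exists_nat_ge (dist a b / (ε / 2))
    refine joined_all hi hε hφ hφc hφf n a b ?_
    rw [div_le_iff₀ (by positivity)] at hn
    linarith
  -- every loop is null-homotopic
  have hnull : ∀ (b : X) (γ : Path b b), γ.Homotopic (Path.refl b) := by
    intro b γ
    obtain ⟨R, hR⟩ : ∃ R, ∀ t, dist (γ t) b ≤ R := by
      obtain ⟨t₀, -, ht₀⟩ := isCompact_univ.exists_isMaxOn univ_nonempty
        ((γ.continuous.dist continuous_const).continuousOn)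
      exact ⟨_, fun t => ht₀ (Set.mem_univ t)⟩
    obtain ⟨n, hn⟩ := exists_nat_ge (R / (ε / 2))
    refine null_all hi hε hφ hφc hφf n b γ fun t => ?_
    rw [div_le_iff₀ (by positivity)] at hn
    linarith [hR t]
  -- conclusion
  rw [simply_connected_iff_unique_homotopic]
  refine ⟨⟨x₀⟩, fun x y => ?_⟩
  obtain ⟨p⟩ := hjoin x y
  have loopsub : ∀ (a : FundamentalGroupoid X) (f : a ⟶ a), f = 𝟙 a := by
    intro a f
    refine Quotient.inductionOn f fun γ => ?_
    rw [FundamentalGroupoid.id_eq_path_refl]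
    exact Quotient.sound (hnull a.as γ)
  have homsub : ∀ (a b : FundamentalGroupoid X) (f g : a ⟶ b), f = g := by
    intro a b f g
    have h1 : f ≫ CategoryTheory.inv g = 𝟙 a := loopsub a _
    have h2 : g ≫ CategoryTheory.inv g = 𝟙 a := CategoryTheory.IsIso.hom_inv_id g
    exact (CategoryTheory.cancel_mono (CategoryTheory.inv g)).mp (h1.trans h2.symm)
  exact ⟨⟨⟨⟦p⟧⟩, fun q => homsub ⟨x⟩ ⟨y⟩ q ⟦p⟧⟩⟩
end
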